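/- arXiv:1711.06042 — 8 statements merged into one kernel-verified Lean document; each statement's English description precedes it below -/
import Mathlib

section
/- Let H be a nontrivial complex Hilbert space and T a bounded linear operator on H. Then the supremum of the real parts of the numerical range of T is recovered as a one-sided limit of norms: sup{ Re⟨Tx, x⟩ : x ∈ H, ‖x‖ = 1 } = lim_{a → 0+} (‖I + aT‖ − 1)/a, where the limit is taken over real a tending to 0 from above and ‖·‖ is the operator norm. -/
open scoped InnerProductSpace

/-- For a bounded operator `T` on a nontrivial complex Hilbert space `H`,
the supremum of the real parts of the numerical range of `T` equals
`lim_{a → 0+} (‖I + aT‖ - 1)/a`. -/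
theorem sup_re_numericalRange_eq_limit
    {H : Type*} [NormedAddCommGroup H] [InnerProductSpace ℂ H] [CompleteSpace H]
    [Nontrivial H] (T : H →L[ℂ] H) :
    Filter.Tendsto (fun a : ℝ => (‖(1 : H →L[ℂ] H) + (a : ℂ) • T‖ - 1) / a)
      (nhdsWithin 0 (Set.Ioi 0))
      (nhds (sSup { r : ℝ | ∃ x : H, ‖x‖ = 1 ∧ r = (⟪x, T x⟫_ℂ).re })) := by
  set S := { r : ℝ | ∃ x : H, ‖x‖ = 1 ∧ r = (⟪x, T x⟫_ℂ).re } with hS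
  obtain ⟨x₀, hx₀⟩ : ∃ x : H, ‖x‖ = 1 := exists_norm_eq H zero_le_one
  have hSne : S.Nonempty := ⟨(⟪x₀, T x₀⟫_ℂ).re, x₀, hx₀, rfl⟩
  have habs : ∀ x : H, ‖x‖ = 1 → |(⟪x, T x⟫_ℂ).re| ≤ ‖T‖ := by
    intro x hx
    calc |(⟪x, T x⟫_ℂ).re| ≤ ‖⟪x, T x⟫_ℂ‖ := Complex.abs_re_le_norm _
      _ ≤ ‖x‖ * ‖T x‖ := norm_inner_le_norm _ _
      _ ≤ ‖x‖ * (‖T‖ * ‖x‖) := by gcongr; exact T.le_opNorm x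
      _ = ‖T‖ := by rw [hx]; ring
  have hSbdd : BddAbove S := by
    refine ⟨‖T‖, ?_⟩
    rintro r ⟨x, hx, rfl⟩
    exact (abs_le.mp (habs x hx)).2
  set M := sSup S with hM
  have hMle : ∀ r ∈ S, r ≤ M := fun r hr => le_csSup hSbdd hr
  have hMlow : -‖T‖ ≤ M :=
    le_trans (abs_le.mp (habs x₀ hx₀)).1 (hMle _ ⟨x₀, hx₀, rfl⟩)
  -- key pointwise bound
  have key : ∀ x : H, (⟪x, T x⟫_ℂ).re ≤ M * ‖x‖ ^ 2 := by
    intro x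
    rcases eq_or_ne x 0 with rfl | hx
    · simp
    · have hnx : (0:ℝ) < ‖x‖ := norm_pos_iff.mpr hx
      set u : H := (‖x‖⁻¹ : ℂ) • x with hu
      have hun : ‖u‖ = 1 := by
        simp [hu, norm_smul, inv_mul_cancel₀ hnx.ne']
      have hru : (⟪u, T u⟫_ℂ).re ≤ M := hMle _ ⟨u, hun, rfl⟩
      have hexp : (⟪u, T u⟫_ℂ).re = ‖x‖⁻¹ ^ 2 * (⟪x, T x⟫_ℂ).re := by
        simp only [hu, map_smul, inner_smul_left, inner_smul_right]
        simp [Complex.mul_re, Complex.conj_ofReal]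
        ring
      rw [hexp] at hru
      have h2 := mul_le_mul_of_nonneg_left hru (le_of_lt (pow_pos hnx 2))
      calc (⟪x, T x⟫_ℂ).re = ‖x‖ ^ 2 * (‖x‖⁻¹ ^ 2 * (⟪x, T x⟫_ℂ).re) := by
            field_simp
        _ ≤ ‖x‖ ^ 2 * M := h2
        _ = M * ‖x‖ ^ 2 := by ring
  -- norm expansion
  have hnorm_sq : ∀ (a : ℝ) (x : H),
      ‖((1 : H →L[ℂ] H) + (a : ℂ) • T) x‖ ^ 2
        = ‖x‖ ^ 2 + 2 * a * (⟪x, T x⟫_ℂ).re + a ^ 2 * ‖T x‖ ^ 2 := by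
    intro a x
    have h1 : ((1 : H →L[ℂ] H) + (a : ℂ) • T) x = x + (a : ℂ) • T x := by
      simp
    rw [h1]
    have h2 := norm_add_sq (𝕜 := ℂ) x ((a : ℂ) • T x)
    simp only [inner_smul_right, norm_smul, Complex.norm_real, Real.norm_eq_abs,
      RCLike.re_to_complex] at h2
    rw [h2]
    simp [Complex.mul_re, mul_pow, sq_abs]
    ring
  -- lower bound
  have hlow : ∀ a : ℝ, 0 < a → M ≤ (‖(1 : H →L[ℂ] H) + (a : ℂ) • T‖ - 1) / a := by
    intro a ha
    refine csSup_le hSne ?_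
    rintro r ⟨x, hx, rfl⟩
    rw [le_div_iff₀ ha]
    have hxx : (⟪x, x⟫_ℂ).re = 1 := by
      have := inner_self_eq_norm_sq (𝕜 := ℂ) x
      simp only [RCLike.re_to_complex] at this
      rw [this, hx]; norm_num
    have h1 : (⟪x, ((1 : H →L[ℂ] H) + (a : ℂ) • T) x⟫_ℂ).re
        = 1 + a * (⟪x, T x⟫_ℂ).re := by
      have he : ((1 : H →L[ℂ] H) + (a : ℂ) • T) x = x + (a : ℂ) • T x := by simp
      rw [he, inner_add_right, inner_smul_right, Complex.add_re, Complex.mul_re]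
      simp [hxx, hx]
    have h2 : (⟪x, ((1 : H →L[ℂ] H) + (a : ℂ) • T) x⟫_ℂ).re
        ≤ ‖(1 : H →L[ℂ] H) + (a : ℂ) • T‖ := by
      have h3 := re_inner_le_norm (𝕜 := ℂ) x (((1 : H →L[ℂ] H) + (a : ℂ) • T) x)
      simp only [RCLike.re_to_complex] at h3
      calc (⟪x, ((1 : H →L[ℂ] H) + (a : ℂ) • T) x⟫_ℂ).re
          ≤ ‖x‖ * ‖((1 : H →L[ℂ] H) + (a : ℂ) • T) x‖ := h3
        _ ≤ ‖x‖ * (‖(1 : H →L[ℂ] H) + (a : ℂ) • T‖ * ‖x‖) := by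
            gcongr; exact ContinuousLinearMap.le_opNorm _ x
        _ = ‖(1 : H →L[ℂ] H) + (a : ℂ) • T‖ := by rw [hx]; ring
    linarith [h1 ▸ h2]
  -- upper bound
  have hup : ∀ a : ℝ, 0 < a →
      (‖(1 : H →L[ℂ] H) + (a : ℂ) • T‖ - 1) / a ≤ M + a * ‖T‖ ^ 2 / 2 := by
    intro a ha
    obtain ⟨t, ht⟩ : ∃ t : ℝ, t = 2 * a * M + a ^ 2 * ‖T‖ ^ 2 := ⟨_, rfl⟩
    have htpos : 0 ≤ 1 + t / 2 := by
      have : 1 + t / 2 ≥ 1 - a * ‖T‖ + a ^ 2 * ‖T‖ ^ 2 / 2 := by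
        have := mul_le_mul_of_nonneg_left hMlow (le_of_lt ha)
        rw [ht]; nlinarith
      nlinarith [sq_nonneg (a * ‖T‖ - 1)]
    have hC : ‖(1 : H →L[ℂ] H) + (a : ℂ) • T‖ ≤ 1 + t / 2 := by
      refine ContinuousLinearMap.opNorm_le_bound _ htpos ?_
      intro x
      have hsq : ‖((1 : H →L[ℂ] H) + (a : ℂ) • T) x‖ ^ 2
          ≤ ((1 + t / 2) * ‖x‖) ^ 2 := by
        rw [hnorm_sq a x]
        have h1 : (⟪x, T x⟫_ℂ).re ≤ M * ‖x‖ ^ 2 := key x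
        have h2 : ‖T x‖ ^ 2 ≤ ‖T‖ ^ 2 * ‖x‖ ^ 2 := by
          have := T.le_opNorm x
          nlinarith [norm_nonneg (T x), norm_nonneg x, T.opNorm_nonneg]
        have h3 : ‖x‖ ^ 2 + 2 * a * (⟪x, T x⟫_ℂ).re + a ^ 2 * ‖T x‖ ^ 2
            ≤ (1 + t) * ‖x‖ ^ 2 := by
          rw [ht]; nlinarith [sq_nonneg a]
        have h4 : (1 + t) * ‖x‖ ^ 2 ≤ ((1 + t / 2) * ‖x‖) ^ 2 := by
          nlinarith [sq_nonneg (t / 2 * ‖x‖)]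
        linarith
      exact (pow_le_pow_iff_left₀ (norm_nonneg _)
        (mul_nonneg htpos (norm_nonneg x)) two_ne_zero).mp hsq
    rw [div_le_iff₀ ha]
    have : a * (M + a * ‖T‖ ^ 2 / 2) = t / 2 := by rw [ht]; ring
    linarith [this]
  -- squeeze
  have hg : Filter.Tendsto (fun _ : ℝ => M) (nhdsWithin 0 (Set.Ioi 0)) (nhds M) :=
    tendsto_const_nhds
  have hh : Filter.Tendsto (fun a : ℝ => M + a * ‖T‖ ^ 2 / 2)
      (nhdsWithin 0 (Set.Ioi 0)) (nhds M) := by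
    have hcont : Continuous (fun a : ℝ => M + a * ‖T‖ ^ 2 / 2) := by fun_prop
    have h0 := hcont.tendsto 0
    have he : M + 0 * ‖T‖ ^ 2 / 2 = M := by ring
    rw [he] at h0
    exact h0.mono_left nhdsWithin_le_nhds
  refine tendsto_of_tendsto_of_tendsto_of_le_of_le' hg hh ?_ ?_
  · filter_upwards [self_mem_nhdsWithin] with a ha using hlow a ha
  · filter_upwards [self_mem_nhdsWithin] with a ha using hup a ha
end

section
/- Let n ≥ 2 and let a₁, …, aₙ be distinct real numbers in (−1, 1), and let A = A(a₁,…,aₙ) be the associated model-space matrix. Then no eigenvalue of A lies on the boundary of the numerical range: each diagonal entry a_j lies in the topological interior (in ℂ) of W(A). -/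
open scoped InnerProductSpace ComplexConjugate

/-- The model-space matrix `A(a₁,…,aₙ)` representing the compression of the shift `S_B`
on the model space `K_B`, where `B` is the finite Blaschke product with zeros `a₁,…,aₙ`. -/
noncomputable def modelMatrix {n : ℕ} (a : Fin n → ℂ) : Matrix (Fin n) (Fin n) ℂ :=
  fun i j =>
    if i = j then a i
    else if i < j then
      (∏ k ∈ Finset.Ioo i j, -conj (a k)) *
        (Real.sqrt (1 - ‖a i‖ ^ 2) : ℂ) *
        (Real.sqrt (1 - ‖a j‖ ^ 2) : ℂ)
    else 0

/-- The numerical range `W(A) = {⟨Ax, x⟩ : x ∈ ℂⁿ, ‖x‖ = 1}` (Euclidean inner product,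
`⟨Ax, x⟩` being linear in `Ax`, i.e. Mathlib's `⟪x, Ax⟫`). -/
noncomputable def numRange {n : ℕ} (A : Matrix (Fin n) (Fin n) ℂ) : Set ℂ :=
  {w | ∃ x : EuclideanSpace ℂ (Fin n), ‖x‖ = 1 ∧ ⟪x, Matrix.toEuclideanLin A x⟫_ℂ = w}

/-- The numerical radius `w(A) = sup{|λ| : λ ∈ W(A)}`. -/
noncomputable def numRadius {n : ℕ} (A : Matrix (Fin n) (Fin n) ℂ) : ℝ :=
  sSup ((fun z : ℂ => ‖z‖) '' numRange A)

lemma valueInRange {n : ℕ} (a : Fin n → ℝ) (p q : Fin n) (hq : (p:ℕ)+1 = (q:ℕ))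
    (α β : ℂ) (habs : ‖α‖ ^ 2 + ‖β‖ ^ 2 = 1) :
    conj α * α * (a p : ℂ) + conj β * β * (a q : ℂ) +
      conj α * β * ((Real.sqrt (1 - (a p)^2) * Real.sqrt (1 - (a q)^2) : ℝ) : ℂ)
      ∈ numRange (modelMatrix (fun i => (a i : ℂ))) := by
  have hpq : p ≠ q := by
    intro h; rw [h] at hq; omega
  have hplt : p < q := by
    rw [Fin.lt_def]; omega
  set x : EuclideanSpace ℂ (Fin n) := WithLp.toLp 2 (fun i => if i = p then α else if i = q then β else 0) with hx
  have hxp : x p = α := by simp [hx]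
  have hxq : x q = β := by simp [hx, hpq.symm]
  have hsum : ∀ (f : Fin n → ℂ), (∑ i, conj (x i) * f i) = conj α * f p + conj β * f q := by
    intro f
    rw [← Finset.sum_subset (Finset.subset_univ ({p, q} : Finset (Fin n)))]
    · rw [Finset.sum_pair hpq, hxp, hxq]
    · intro i _ hi
      simp only [Finset.mem_insert, Finset.mem_singleton, not_or] at hi
      simp [hx, hi.1, hi.2]
  refine ⟨x, ?_, ?_⟩
  · rw [EuclideanSpace.norm_eq]
    have : ∑ i, ‖x i‖ ^ 2 = ‖α‖^2 + ‖β‖^2 := by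
      rw [← Finset.sum_subset (Finset.subset_univ ({p, q} : Finset (Fin n)))]
      · rw [Finset.sum_pair hpq, hxp, hxq]
      · intro i _ hi
        simp only [Finset.mem_insert, Finset.mem_singleton, not_or] at hi
        simp [hx, hi.1, hi.2]
    rw [this]
    rw [habs, Real.sqrt_one]
  · have hIoo : Finset.Ioo p q = ∅ := by
      ext k
      simp only [Finset.mem_Ioo, Finset.notMem_empty, iff_false, not_and]
      intro h1 h2
      rw [Fin.lt_def] at h1 h2
      omega
    have hMpq : modelMatrix (fun i => (a i : ℂ)) p q
        = ((Real.sqrt (1 - (a p)^2) * Real.sqrt (1 - (a q)^2) : ℝ) : ℂ) := by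
      simp [modelMatrix, hpq, hplt, hIoo, Complex.norm_real, Real.norm_eq_abs, sq_abs]
    have hMqp : modelMatrix (fun i => (a i : ℂ)) q p = 0 := by
      simp [modelMatrix, hpq.symm, not_lt_of_gt hplt, asymm hplt]
    have hMpp : modelMatrix (fun i => (a i : ℂ)) p p = (a p : ℂ) := by simp [modelMatrix]
    have hMqq : modelMatrix (fun i => (a i : ℂ)) q q = (a q : ℂ) := by simp [modelMatrix]
    rw [PiLp.inner_apply]
    simp only [Matrix.toEuclideanLin_apply, RCLike.inner_apply']
    have hsum2 : ∀ i : Fin n, (∑ k, modelMatrix (fun i => (a i : ℂ)) i k * x k)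
        = modelMatrix (fun i => (a i : ℂ)) i p * α + modelMatrix (fun i => (a i : ℂ)) i q * β := by
      intro i
      rw [← Finset.sum_subset (Finset.subset_univ ({p, q} : Finset (Fin n)))]
      · rw [Finset.sum_pair hpq, hxp, hxq]
      · intro k _ hk
        simp only [Finset.mem_insert, Finset.mem_singleton, not_or] at hk
        simp [hx, hk.1, hk.2]
    have hmv : ∀ i : Fin n, (WithLp.toLp 2
        ((modelMatrix fun i => (a i : ℂ)).mulVec (WithLp.ofLp x))) i
        = ∑ k, modelMatrix (fun i => (a i : ℂ)) i k * x k := by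
      intro i
      simp only [PiLp.toLp_apply, Matrix.mulVec, dotProduct]
    calc (∑ i, conj (x i) * (WithLp.toLp 2
          ((modelMatrix fun i => (a i : ℂ)).mulVec (WithLp.ofLp x))) i)
        = ∑ i, conj (x i) * ∑ k, modelMatrix (fun i => (a i : ℂ)) i k * x k := by
          refine Finset.sum_congr rfl fun i _ => ?_
          rw [hmv i]
      _ = conj α * (∑ k, modelMatrix (fun i => (a i : ℂ)) p k * x k)
            + conj β * (∑ k, modelMatrix (fun i => (a i : ℂ)) q k * x k) :=
          hsum (fun i => ∑ k, modelMatrix (fun i => (a i : ℂ)) i k * x k)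
      _ = conj α * α * (a p : ℂ) + conj β * β * (a q : ℂ) +
            conj α * β * ((Real.sqrt (1 - (a p)^2) * Real.sqrt (1 - (a q)^2) : ℝ) : ℂ) := by
          rw [hsum2 p, hsum2 q, hMpp, hMqq, hMpq, hMqp]
          ring

lemma interior_helper {S : Set ℂ} (c : ℂ) (d b : ℝ) (hb : 0 < b)
    (h : ∀ u : ℝ, 0 ≤ u → u ≤ 1 → ∀ z : ℂ, ‖z‖ = 1 →
      c + ((u^2*d : ℝ) : ℂ) + ((u * Real.sqrt (1-u^2) * b : ℝ) : ℂ) * z ∈ S) :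
    c ∈ interior S := by
  set u₀ : ℝ := min (1/2) (b/(4*(|d|+1))) with hu₀
  have hd0 : (0:ℝ) < |d| + 1 := by positivity
  have hu₀pos : 0 < u₀ := lt_min (by norm_num) (by positivity)
  have hu₀le : u₀ ≤ 1/2 := min_le_left _ _
  have hu₀le1 : u₀ ≤ 1 := hu₀le.trans (by norm_num)
  have hu₀d : u₀ * |d| ≤ b/4 := by
    have h1 : u₀ ≤ b/(4*(|d|+1)) := min_le_right _ _
    have h2 : u₀ * |d| ≤ (b/(4*(|d|+1))) * |d| :=
      mul_le_mul_of_nonneg_right h1 (abs_nonneg d)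
    refine h2.trans ?_
    rw [div_mul_eq_mul_div, div_le_div_iff₀ (by positivity) (by norm_num)]
    nlinarith [abs_nonneg d, hb.le]
  have hsq : ∀ u : ℝ, 0 ≤ u → u ≤ u₀ → (3:ℝ)/4 ≤ Real.sqrt (1 - u^2) := by
    intro u hu0 huu
    have : ((3:ℝ)/4)^2 ≤ 1 - u^2 := by nlinarith [hu₀le, hu₀pos.le]
    calc (3:ℝ)/4 = Real.sqrt (((3:ℝ)/4)^2) := by
          rw [Real.sqrt_sq (by norm_num)]
      _ ≤ Real.sqrt (1 - u^2) := Real.sqrt_le_sqrt this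
  set ρ := u₀ * b / 4 with hρ
  have hρpos : 0 < ρ := by positivity
  rw [mem_interior]
  refine ⟨Metric.ball c ρ, ?_, Metric.isOpen_ball, Metric.mem_ball_self hρpos⟩
  intro w hw
  rw [Metric.mem_ball, dist_eq_norm] at hw
  have hw' : ‖w - c‖ < ρ := hw
  by_cases hwc : w = c
  · have := h 0 le_rfl zero_le_one 1 (by simp)
    simpa [hwc] using this
  · set g : ℝ → ℝ := fun u => u * Real.sqrt (1-u^2) * b - ‖w - c - ((u^2*d : ℝ) : ℂ)‖
      with hg
    have hcont : ContinuousOn g (Set.Icc 0 u₀) := by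
      apply Continuous.continuousOn
      apply Continuous.sub
      · fun_prop
      · exact continuous_norm.comp (by fun_prop)
    have hg0 : g 0 < 0 := by
      have hpos : 0 < ‖w - c‖ := by
        rw [norm_pos_iff]
        exact sub_ne_zero_of_ne hwc
      have hgeq : g 0 = -(‖w - c‖) := by
        show (0:ℝ) * Real.sqrt (1-0^2) * b - ‖w - c - (((0:ℝ)^2*d : ℝ) : ℂ)‖ = _
        norm_num
      rw [hgeq]
      linarith
    have hgu₀ : 0 < g u₀ := by
      have h1 : ‖w - c - ((u₀^2*d : ℝ) : ℂ)‖
          ≤ ‖w - c‖ + ‖((u₀^2*d : ℝ) : ℂ)‖ := by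
        have := norm_sub_le (w - c) (((u₀^2*d : ℝ) : ℂ))
        simpa using this
      have h2 : ‖((u₀^2*d : ℝ) : ℂ)‖ = u₀^2 * |d| := by
        rw [Complex.norm_real, Real.norm_eq_abs, abs_mul, abs_of_nonneg (by positivity : (0:ℝ) ≤ u₀^2)]
      have h3 : u₀^2 * |d| ≤ u₀ * (b/4) := by
        have := mul_le_mul_of_nonneg_left hu₀d hu₀pos.le
        calc u₀^2 * |d| = u₀ * (u₀ * |d|) := by ring
          _ ≤ u₀ * (b/4) := this
      have h4 : (3:ℝ)/4 ≤ Real.sqrt (1 - u₀^2) := hsq u₀ hu₀pos.le le_rfl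
      have h5 : u₀ * (3/4) * b ≤ u₀ * Real.sqrt (1 - u₀^2) * b := by
        have := mul_le_mul_of_nonneg_left h4 hu₀pos.le
        exact mul_le_mul_of_nonneg_right this hb.le
      have h6 : ‖w - c - ((u₀^2*d : ℝ) : ℂ)‖ < u₀ * b / 2 := by
        rw [h2] at h1
        calc ‖w - c - ((u₀^2*d : ℝ) : ℂ)‖ ≤ ‖w - c‖ + u₀^2 * |d| := h1
          _ < ρ + u₀ * (b/4) := by linarith
          _ = u₀ * b / 2 := by rw [hρ]; ring
      show 0 < u₀ * Real.sqrt (1-u₀^2) * b - ‖w - c - ((u₀^2*d : ℝ) : ℂ)‖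
      nlinarith [mul_pos hu₀pos hb]
    have hIcc : (0:ℝ) ∈ Set.Icc (g 0) (g u₀) := ⟨hg0.le, hgu₀.le⟩
    obtain ⟨u, huIcc, hgu⟩ := intermediate_value_Icc hu₀pos.le hcont hIcc
    have hu0 : 0 < u := by
      rcases lt_or_eq_of_le huIcc.1 with h' | h'
      · exact h'
      · exfalso; rw [← h'] at hgu; linarith
    have hu1 : u ≤ 1 := huIcc.2.trans hu₀le1
    have hsqpos : 0 < Real.sqrt (1 - u^2) :=
      lt_of_lt_of_le (by norm_num) (hsq u hu0.le huIcc.2)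
    set r : ℝ := u * Real.sqrt (1-u^2) * b with hr
    have hrpos : 0 < r := by positivity
    have habs : ‖w - c - ((u^2*d : ℝ) : ℂ)‖ = r := by
      have := hgu.symm
      simp only [hg] at this
      linarith [this]
    set z : ℂ := (w - c - ((u^2*d : ℝ) : ℂ)) / (r : ℂ) with hz
    have hzabs : ‖z‖ = 1 := by
      rw [hz, norm_div, habs, Complex.norm_real, Real.norm_eq_abs, abs_of_pos hrpos, div_self hrpos.ne']
    have := h u hu0.le hu1 z hzabs
    have hrC : ((r:ℝ):ℂ) ≠ 0 := by exact_mod_cast hrpos.ne'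
    have hmul : ((r:ℝ):ℂ) * z = w - c - ((u^2*d : ℝ) : ℂ) := by
      rw [hz, mul_comm, div_mul_cancel₀ _ hrC]
    have heq : c + ((u^2*d : ℝ) : ℂ) + ((u * Real.sqrt (1-u^2) * b : ℝ) : ℂ) * z = w := by
      have h7 : (u * Real.sqrt (1-u^2) * b : ℝ) = r := hr.symm
      rw [h7, hmul]
      ring
    rwa [heq] at this

lemma key {n : ℕ} (a : Fin n → ℝ) (ha : ∀ i, a i ∈ Set.Ioo (-1 : ℝ) 1)
    (p q : Fin n) (hq : (p:ℕ)+1 = (q:ℕ)) (t : Fin n) (ht : t = p ∨ t = q) :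
    ((a t : ℂ)) ∈ interior (numRange (modelMatrix (fun i => (a i : ℂ)))) := by
  set b : ℝ := Real.sqrt (1 - (a p)^2) * Real.sqrt (1 - (a q)^2) with hbdef
  have hb : 0 < b := by
    apply mul_pos <;> apply Real.sqrt_pos.mpr
    · nlinarith [(ha p).1, (ha p).2]
    · nlinarith [(ha q).1, (ha q).2]
  have hzz : ∀ z : ℂ, ‖z‖ = 1 → conj z * z = 1 := by
    intro z hz
    rw [mul_comm, Complex.mul_conj, Complex.normSq_eq_norm_sq, hz]
    norm_num
  have hsq : ∀ u : ℝ, 0 ≤ u → u ≤ 1 → Real.sqrt (1-u^2) * Real.sqrt (1-u^2) = 1 - u^2 :=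
    fun u h0 h1 => Real.mul_self_sqrt (by nlinarith)
  have habs' : ∀ (u : ℝ), 0 ≤ u → u ≤ 1 → ∀ z : ℂ, ‖z‖ = 1 →
      ‖((Real.sqrt (1-u^2) : ℝ) : ℂ)‖ ^ 2 + ‖(u:ℂ) * z‖ ^ 2 = 1 := by
    intro u h0 h1 z hz
    rw [Complex.norm_real, Real.norm_eq_abs, abs_of_nonneg (Real.sqrt_nonneg _), norm_mul, hz,
      Complex.norm_real, Real.norm_eq_abs, abs_of_nonneg h0, Real.sq_sqrt (by nlinarith)]
    ring
  have habs'' : ∀ (u : ℝ), 0 ≤ u → u ≤ 1 → ∀ z : ℂ, ‖z‖ = 1 →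
      ‖(u:ℂ) * conj z‖ ^ 2 + ‖((Real.sqrt (1-u^2) : ℝ) : ℂ)‖ ^ 2 = 1 := by
    intro u h0 h1 z hz
    rw [Complex.norm_real, Real.norm_eq_abs, abs_of_nonneg (Real.sqrt_nonneg _), norm_mul,
      Complex.norm_conj, hz, Complex.norm_real, Real.norm_eq_abs, abs_of_nonneg h0,
      Real.sq_sqrt (by nlinarith)]
    ring
  rcases ht with rfl | rfl
  · apply interior_helper _ (a q - a t) b hb
    intro u h0 h1 z hz
    have h := valueInRange a t q hq ((Real.sqrt (1-u^2) : ℝ) : ℂ) ((u:ℂ) * z)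
      (habs' u h0 h1 z hz)
    convert h using 1
    have hs : ((Real.sqrt (1-u^2) : ℝ) : ℂ) * ((Real.sqrt (1-u^2) : ℝ) : ℂ)
        = 1 - (u:ℂ)^2 := by
      rw [← Complex.ofReal_mul, hsq u h0 h1]
      push_cast; ring
    simp only [map_mul, Complex.conj_ofReal, Complex.conj_conj]
    rw [← hbdef]
    push_cast
    linear_combination (-(a t : ℂ)) * hs - ((u:ℂ)^2 * (a q : ℂ)) * (hzz z hz)
  · apply interior_helper _ (a p - a t) b hb
    intro u h0 h1 z hz
    have h := valueInRange a p t hq ((u:ℂ) * conj z) ((Real.sqrt (1-u^2) : ℝ) : ℂ)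
      (habs'' u h0 h1 z hz)
    convert h using 1
    have hs : ((Real.sqrt (1-u^2) : ℝ) : ℂ) * ((Real.sqrt (1-u^2) : ℝ) : ℂ)
        = 1 - (u:ℂ)^2 := by
      rw [← Complex.ofReal_mul, hsq u h0 h1]
      push_cast; ring
    simp only [map_mul, Complex.conj_ofReal, Complex.conj_conj]
    rw [← hbdef]
    push_cast
    linear_combination (-(a t : ℂ)) * hs - ((u:ℂ)^2 * (a p : ℂ)) * (hzz z hz)


/-- If `n ≥ 2` and `a₁,…,aₙ` are distinct real numbers in `(-1,1)`, then
no eigenvalue of the associated model-space matrix `A` lies on the boundary of the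
numerical range: each diagonal entry `a_j` lies in the interior of `W(A)`. -/
theorem eigenvalues_mem_interior_numRange
    (n : ℕ) (hn : 2 ≤ n) (a : Fin n → ℝ)
    (ha : ∀ i, a i ∈ Set.Ioo (-1 : ℝ) 1) (hdist : Function.Injective a) :
    ∀ j : Fin n, ((a j : ℂ)) ∈ interior (numRange (modelMatrix (fun i => (a i : ℂ)))) := by
  intro j
  by_cases hj : (j:ℕ) + 1 < n
  · exact key a ha j ⟨(j:ℕ)+1, hj⟩ rfl j (Or.inl rfl)
  · have h1 : 1 ≤ (j:ℕ) := by have := j.isLt; omega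
    refine key a ha ⟨(j:ℕ)-1, by omega⟩ j ?_ j (Or.inr rfl)
    show ((j:ℕ)-1) + 1 = (j:ℕ)
    omega
end

section
/- Let a₁, a₂ ∈ (−1, 1) be real and let A be the 2×2 matrix with rows (a₁, √((1−a₁²)(1−a₂²))) and (0, a₂). Then the numerical radius of A equals max{ |a₁ + a₂ − a₁a₂ + 1|/2, |a₁ + a₂ + a₁a₂ − 1|/2 }. -/
open scoped InnerProductSpace ComplexConjugate

lemma conj_mul_self' (z : ℂ) : conj z * z = ((‖z‖ ^ 2 : ℝ) : ℂ) := by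
  rw [Complex.conj_mul']; push_cast; ring

lemma inner_matrix_two (A : Matrix (Fin 2) (Fin 2) ℂ) (x : EuclideanSpace ℂ (Fin 2)) :
    ⟪x, Matrix.toEuclideanLin A x⟫_ℂ =
      conj (x 0) * (A 0 0 * x 0 + A 0 1 * x 1) + conj (x 1) * (A 1 0 * x 0 + A 1 1 * x 1) := by
  simp [Matrix.toEuclideanLin_apply, PiLp.inner_apply, Fin.sum_univ_two, Matrix.mulVec,
    dotProduct, RCLike.inner_apply]
  ring

lemma max_abs_lemma (s q : ℝ) (hq : 0 ≤ q) : max (|s + q|) (|s - q|) = |s| + q := by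
  rcases le_total 0 s with h | h
  · rw [abs_of_nonneg h, abs_of_nonneg (by linarith : (0:ℝ) ≤ s + q), max_eq_left]
    rcases abs_cases (s - q) with ⟨h1, _⟩ | ⟨h1, _⟩ <;> linarith
  · rw [abs_of_nonpos h, abs_of_nonpos (show s - q ≤ 0 by linarith)]
    rw [max_eq_right]
    · ring
    rcases abs_cases (s + q) with ⟨h1, _⟩ | ⟨h1, _⟩ <;> linarith

lemma ub_core (d b m P Q : ℝ) (hb : 0 ≤ b) (hm : 0 ≤ m) (hP : 0 ≤ P) (hQ : 0 ≤ Q)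
    (hPQ : P^2 + Q^2 = 1) (hkey : m^2 = d^2 + b^2/4) :
    |d*(P^2 - Q^2)| + b*(P*Q) ≤ m := by
  have h4 : (P^2 + Q^2)^2 = 1 := by rw [hPQ]; norm_num
  have h1 : (|d| * |P^2-Q^2| + b*(P*Q))^2 ≤ m^2 := by
    nlinarith [sq_nonneg (|d| * (2*(P*Q)) - (b/2) * |P^2-Q^2|), sq_abs d, sq_abs (P^2-Q^2),
      abs_nonneg d, abs_nonneg (P^2-Q^2), mul_nonneg hP hQ,
      mul_nonneg (abs_nonneg d) (abs_nonneg (P^2-Q^2))]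
  rw [abs_mul]
  nlinarith [h1, mul_nonneg (abs_nonneg d) (abs_nonneg (P^2-Q^2)),
    mul_nonneg hb (mul_nonneg hP hQ)]

lemma numRadius_core (a₁ a₂ b : ℝ) (hbpos : 0 < b) (hb2 : b^2 = (1-a₁^2)*(1-a₂^2))
    (hp : 0 < 1 - a₁*a₂) :
    numRadius !![(a₁ : ℂ), (b : ℂ); 0, (a₂ : ℂ)] = |a₁+a₂|/2 + (1 - a₁*a₂)/2 := by
  have hkey : ((1-a₁*a₂)/2)^2 = ((a₁-a₂)/2)^2 + b^2/4 := by
    linear_combination (-(1:ℝ)/4) * hb2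
  have e00 : (!![(a₁:ℂ), (b:ℂ); 0, (a₂:ℂ)]) 0 0 = (a₁:ℂ) := rfl
  have e01 : (!![(a₁:ℂ), (b:ℂ); 0, (a₂:ℂ)]) 0 1 = (b:ℂ) := rfl
  have e10 : (!![(a₁:ℂ), (b:ℂ); 0, (a₂:ℂ)]) 1 0 = 0 := rfl
  have e11 : (!![(a₁:ℂ), (b:ℂ); 0, (a₂:ℂ)]) 1 1 = (a₂:ℂ) := rfl
  -- upper bound
  have hub : ∀ y ∈ (fun z : ℂ => ‖z‖) '' numRange !![(a₁ : ℂ), (b : ℂ); 0, (a₂ : ℂ)],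
      y ≤ |a₁+a₂|/2 + (1 - a₁*a₂)/2 := by
    rintro y ⟨w, ⟨x, hx, hwx⟩, rfl⟩
    set u := x 0 with hu
    set v := x 1 with hv
    set P := ‖u‖ with hPdef
    set Q := ‖v‖ with hQdef
    have hnorm : P ^ 2 + Q ^ 2 = 1 := by
      rw [EuclideanSpace.norm_eq, Fin.sum_univ_two] at hx
      have := Real.sqrt_eq_one.mp hx
      simpa [← hu, ← hv, ← hPdef, ← hQdef] using this
    have hcu : conj u * u = ((P^2 : ℝ):ℂ) := conj_mul_self' u
    have hcv : conj v * v = ((Q^2 : ℝ):ℂ) := conj_mul_self' v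
    have hPQc : (P:ℂ)^2 + (Q:ℂ)^2 = 1 := by exact_mod_cast hnorm
    have hw2 : w = (((a₁+a₂)/2 : ℝ) : ℂ) + ((((a₁-a₂)/2)*(P^2-Q^2) : ℝ) : ℂ)
        + (b:ℂ) * (conj u * v) := by
      rw [← hwx, inner_matrix_two, e00, e01, e10, e11]
      push_cast
      push_cast at hcu hcv
      linear_combination (a₁:ℂ) * hcu + (a₂:ℂ) * hcv + (((a₁+a₂)/2 : ℂ)) * hPQc
    have e1 : ‖(((a₁+a₂)/2 : ℝ):ℂ)‖ = |(a₁+a₂)/2| := by rw [Complex.norm_real, Real.norm_eq_abs]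
    have e2 : ‖((((a₁-a₂)/2)*(P^2-Q^2) : ℝ):ℂ)‖ = |((a₁-a₂)/2)*(P^2-Q^2)| := by
      rw [Complex.norm_real, Real.norm_eq_abs]
    have e3 : ‖(b:ℂ) * (conj u * v)‖ = b * (P * Q) := by
      rw [norm_mul, norm_mul, Complex.norm_conj, Complex.norm_real, Real.norm_eq_abs, abs_of_pos hbpos, ← hPdef,
        ← hQdef]
    have tri : ‖w‖ ≤ |(a₁+a₂)/2| + (|((a₁-a₂)/2)*(P^2-Q^2)| + b*(P*Q)) := by
      rw [hw2]
      calc ‖(((a₁+a₂)/2 : ℝ) : ℂ) + ((((a₁-a₂)/2)*(P^2-Q^2) : ℝ) : ℂ)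
              + (b:ℂ) * (conj u * v)‖
          ≤ ‖(((a₁+a₂)/2 : ℝ) : ℂ) + ((((a₁-a₂)/2)*(P^2-Q^2) : ℝ) : ℂ)‖
            + ‖(b:ℂ) * (conj u * v)‖ := norm_add_le _ _
        _ ≤ ‖(((a₁+a₂)/2 : ℝ):ℂ)‖ + ‖((((a₁-a₂)/2)*(P^2-Q^2) : ℝ):ℂ)‖
            + ‖(b:ℂ) * (conj u * v)‖ := by
            linarith [norm_add_le (((a₁+a₂)/2 : ℝ):ℂ)
              ((((a₁-a₂)/2)*(P^2-Q^2) : ℝ):ℂ)]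
        _ = |(a₁+a₂)/2| + (|((a₁-a₂)/2)*(P^2-Q^2)| + b*(P*Q)) := by
            rw [e1, e2, e3]; ring
    have hub2 := ub_core ((a₁-a₂)/2) b ((1-a₁*a₂)/2) P Q hbpos.le (by linarith)
      (norm_nonneg u) (norm_nonneg v) hnorm hkey
    have habs2 : |(a₁+a₂)/2| = |a₁+a₂|/2 := by rw [abs_div]; norm_num
    show ‖w‖ ≤ _
    linarith [tri, hub2]
  -- membership of the claimed value
  have hmem : (|a₁+a₂|/2 + (1 - a₁*a₂)/2) ∈
      (fun z : ℂ => ‖z‖) '' numRange !![(a₁ : ℂ), (b : ℂ); 0, (a₂ : ℂ)] := by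
    obtain ⟨ε, hε, hεabs⟩ : ∃ ε : ℝ, (ε = 1 ∨ ε = -1) ∧
        |(a₁+a₂)/2 + ε*((1-a₁*a₂)/2)| = |a₁+a₂|/2 + (1-a₁*a₂)/2 := by
      rcases le_total 0 (a₁+a₂) with h | h
      · exact ⟨1, Or.inl rfl, by
          rw [abs_of_nonneg h,
            abs_of_nonneg (by linarith : (0:ℝ) ≤ (a₁+a₂)/2 + 1*((1-a₁*a₂)/2))]
          ring⟩
      · exact ⟨-1, Or.inr rfl, by
          rw [abs_of_nonpos h, abs_of_nonpos (by linarith : (a₁+a₂)/2 + (-1)*((1-a₁*a₂)/2) ≤ 0)]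
          ring⟩
    have hε2 : ε^2 = 1 := by rcases hε with rfl | rfl <;> norm_num
    set V : ℝ := (1-a₁*a₂)/2 + ε*((a₁-a₂)/2) with hV
    set N := Real.sqrt (V^2 + b^2/4) with hNdef
    have hN2 : N^2 = V^2 + b^2/4 := Real.sq_sqrt (by positivity)
    have hNpos : 0 < N := Real.sqrt_pos.2 (by nlinarith [sq_nonneg V])
    have hNne : N ≠ 0 := ne_of_gt hNpos
    set p : ℝ := V/N with hpdef
    set q : ℝ := ε*b/(2*N) with hqdef
    have hval0 : a₁*V^2 + b*(V*(ε*b/2)) + a₂*(ε*b/2)^2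
        = ((a₁+a₂)/2 + ε*((1-a₁*a₂)/2)) * (V^2 + (ε*b/2)^2) := by
      rw [hV]
      rcases hε with rfl | rfl
      · linear_combination (-((1-a₁*a₂)/2 + (a₁-a₂)/2)) * hkey
      · linear_combination (((1-a₁*a₂)/2 - (a₁-a₂)/2)) * hkey
    have hN2' : N^2 = V^2 + (ε*b/2)^2 := by
      rw [hN2]; linear_combination (-(b^2/4)) * hε2
    have hsum : p^2 + q^2 = 1 := by
      have h1 : p^2 + q^2 = (V^2 + (ε*b/2)^2)/N^2 := by rw [hpdef, hqdef]; ring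
      rw [h1, ← hN2', div_self (pow_ne_zero 2 hNne)]
    have hreal : a₁*p^2 + b*(p*q) + a₂*q^2 = (a₁+a₂)/2 + ε*((1-a₁*a₂)/2) := by
      have h1 : a₁*p^2 + b*(p*q) + a₂*q^2
          = (a₁*V^2 + b*(V*(ε*b/2)) + a₂*(ε*b/2)^2)/N^2 := by
        rw [hpdef, hqdef]; ring
      rw [h1, hval0, ← hN2', mul_div_assoc, div_self (by positivity), mul_one]
    set x : EuclideanSpace ℂ (Fin 2) := (WithLp.equiv 2 (Fin 2 → ℂ)).symm ![(p:ℂ), (q:ℂ)]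
      with hxdef
    have hx0 : x 0 = (p:ℂ) := by rw [hxdef]; simp
    have hx1 : x 1 = (q:ℂ) := by rw [hxdef]; simp
    have hxnorm : ‖x‖ = 1 := by
      rw [EuclideanSpace.norm_eq, Fin.sum_univ_two, hx0, hx1]
      rw [Complex.norm_real, Complex.norm_real, Real.norm_eq_abs, Real.norm_eq_abs,
        sq_abs, sq_abs, hsum, Real.sqrt_one]
    have hval : ⟪x, Matrix.toEuclideanLin !![(a₁ : ℂ), (b : ℂ); 0, (a₂ : ℂ)] x⟫_ℂ
        = (((a₁+a₂)/2 + ε*((1-a₁*a₂)/2) : ℝ) : ℂ) := by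
      rw [inner_matrix_two, e00, e01, e10, e11, hx0, hx1, ← hreal]
      rw [Complex.conj_ofReal, Complex.conj_ofReal]
      push_cast
      ring
    exact ⟨_, ⟨x, hxnorm, hval⟩, by beta_reduce; rw [Complex.norm_real, Real.norm_eq_abs, hεabs]⟩
  refine le_antisymm (csSup_le ⟨_, hmem⟩ hub) (le_csSup ⟨_, hub⟩ hmem)

/-- For real `a₁, a₂ ∈ (-1,1)`, the numerical radius of the `2×2` matrix
with rows `(a₁, √((1−a₁²)(1−a₂²)))` and `(0, a₂)` equals
`max{|a₁+a₂−a₁a₂+1|/2, |a₁+a₂+a₁a₂−1|/2}`. -/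
theorem numRadius_deg_two
    (a₁ a₂ : ℝ) (h₁ : a₁ ∈ Set.Ioo (-1 : ℝ) 1) (h₂ : a₂ ∈ Set.Ioo (-1 : ℝ) 1) :
    numRadius !![(a₁ : ℂ), (Real.sqrt ((1 - a₁ ^ 2) * (1 - a₂ ^ 2)) : ℂ); 0, (a₂ : ℂ)] =
      max (|a₁ + a₂ - a₁ * a₂ + 1| / 2) (|a₁ + a₂ + a₁ * a₂ - 1| / 2) := by
  obtain ⟨h1l, h1r⟩ := h₁
  obtain ⟨h2l, h2r⟩ := h₂
  have e1 : (0:ℝ) < 1 - a₁^2 := by nlinarith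
  have e2 : (0:ℝ) < 1 - a₂^2 := by nlinarith
  have hbpos : 0 < Real.sqrt ((1 - a₁ ^ 2) * (1 - a₂ ^ 2)) :=
    Real.sqrt_pos.2 (mul_pos e1 e2)
  have hb2 : (Real.sqrt ((1 - a₁ ^ 2) * (1 - a₂ ^ 2)))^2 = (1-a₁^2)*(1-a₂^2) :=
    Real.sq_sqrt (mul_pos e1 e2).le
  have hp : (0:ℝ) < 1 - a₁*a₂ := by nlinarith
  rw [numRadius_core a₁ a₂ _ hbpos hb2 hp]
  rw [show a₁ + a₂ - a₁ * a₂ + 1 = (a₁+a₂) + (1 - a₁*a₂) by ring,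
      show a₁ + a₂ + a₁ * a₂ - 1 = (a₁+a₂) - (1 - a₁*a₂) by ring]
  have hmax := max_abs_lemma (a₁+a₂) (1-a₁*a₂) hp.le
  have h2 : max (|(a₁+a₂) + (1 - a₁*a₂)| / 2) (|(a₁+a₂) - (1 - a₁*a₂)| / 2)
      = (max (|(a₁+a₂) + (1-a₁*a₂)|) (|(a₁+a₂) - (1-a₁*a₂)|))/2 := by
    rcases le_total (|(a₁+a₂) + (1-a₁*a₂)|) (|(a₁+a₂) - (1-a₁*a₂)|) with h | h
    · rw [max_eq_right h, max_eq_right (by linarith)]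
    · rw [max_eq_left h, max_eq_left (by linarith)]
  rw [h2, hmax]
  ring
end

section
/- Let a₁, a₂ ∈ (−1, 1) be real. (i) Every complex root z₀ of the cubic z(z−a₁)(z−a₂) + (1−a₁z)(1−a₂z) = 0 satisfies either z₀ = −1 or (|z₀| = 1 and Re z₀ = (a₁ + a₂ + 1 − a₁a₂)/2). (ii) Every complex root z₀ of the cubic z(z−a₁)(z−a₂) − (1−a₁z)(1−a₂z) = 0 satisfies either z₀ = 1 or (|z₀| = 1 and Re z₀ = (a₁ + a₂ − 1 + a₁a₂)/2). -/
lemma quad_aux (s : ℝ) (hs : s^2 < 4) (z : ℂ) (hz : z^2 - s*z + 1 = 0) :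
    ‖z‖ = 1 ∧ z.re = s/2 := by
  have hre := congrArg Complex.re hz
  have him := congrArg Complex.im hz
  simp [pow_two, Complex.mul_re, Complex.mul_im] at hre him
  have hx : z.re = s/2 := by
    rcases eq_or_ne z.im 0 with hy | hy
    · exfalso; rw [hy] at hre; nlinarith [sq_nonneg (z.re - s/2)]
    · have h2 : z.im * (2*z.re - s) = 0 := by linear_combination him
      rcases mul_eq_zero.mp h2 with h' | h'
      · exact absurd h' hy
      · linarith
  refine ⟨?_, hx⟩
  rw [hx] at hre
  have hsq : ‖z‖ ^ 2 = 1 := by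
    rw [Complex.sq_norm, Complex.normSq_apply, hx]
    linarith
  nlinarith [norm_nonneg z, hsq]

/-- For real `a₁, a₂ ∈ (-1,1)`:
(i) every complex root of `z(z−a₁)(z−a₂) + (1−a₁z)(1−a₂z) = 0` is either `−1` or has
modulus `1` and real part `(a₁+a₂+1−a₁a₂)/2`;
(ii) every complex root of `z(z−a₁)(z−a₂) − (1−a₁z)(1−a₂z) = 0` is either `1` or has
modulus `1` and real part `(a₁+a₂−1+a₁a₂)/2`. -/
theorem roots_deg_two_cubics
    (a₁ a₂ : ℝ) (h₁ : a₁ ∈ Set.Ioo (-1 : ℝ) 1) (h₂ : a₂ ∈ Set.Ioo (-1 : ℝ) 1) :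
    (∀ z₀ : ℂ, z₀ * (z₀ - a₁) * (z₀ - a₂) + (1 - a₁ * z₀) * (1 - a₂ * z₀) = 0 →
      z₀ = -1 ∨ (‖z₀‖ = 1 ∧ z₀.re = (a₁ + a₂ + 1 - a₁ * a₂) / 2)) ∧
    (∀ z₀ : ℂ, z₀ * (z₀ - a₁) * (z₀ - a₂) - (1 - a₁ * z₀) * (1 - a₂ * z₀) = 0 →
      z₀ = 1 ∨ (‖z₀‖ = 1 ∧ z₀.re = (a₁ + a₂ - 1 + a₁ * a₂) / 2)) := by
  obtain ⟨ha1, ha1'⟩ := h₁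
  obtain ⟨ha2, ha2'⟩ := h₂
  constructor
  · intro z₀ hz
    rcases eq_or_ne z₀ (-1) with h | h
    · exact Or.inl h
    · right
      set s : ℝ := a₁ + a₂ + 1 - a₁ * a₂ with hsdef
      have hs : s^2 < 4 := by
        have huv : (0:ℝ) < (1 - a₁) * (1 - a₂) := mul_pos (by linarith) (by linarith)
        have h4 : (1 - a₁) * (1 - a₂) < 4 := by nlinarith
        nlinarith [mul_pos huv (by linarith : (0:ℝ) < 4 - (1 - a₁) * (1 - a₂))]
      have hfac : (z₀ + 1) * (z₀^2 - (s:ℂ)*z₀ + 1) = 0 := by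
        rw [← hz]; push_cast [hsdef]; ring
      have h1 : z₀ + 1 ≠ 0 := fun hc => h (by linear_combination hc)
      have hq : z₀^2 - (s:ℂ)*z₀ + 1 = 0 := by
        rcases mul_eq_zero.mp hfac with h' | h'
        · exact absurd h' h1
        · exact h'
      have := quad_aux s hs z₀ hq
      exact ⟨this.1, by rw [this.2]⟩
  · intro z₀ hz
    rcases eq_or_ne z₀ 1 with h | h
    · exact Or.inl h
    · right
      set s : ℝ := a₁ + a₂ - 1 + a₁ * a₂ with hsdef
      have hs : s^2 < 4 := by
        have huv : (0:ℝ) < (1 + a₁) * (1 + a₂) := mul_pos (by linarith) (by linarith)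
        have h4 : (1 + a₁) * (1 + a₂) < 4 := by nlinarith
        nlinarith [mul_pos huv (by linarith : (0:ℝ) < 4 - (1 + a₁) * (1 + a₂))]
      have hfac : (z₀ - 1) * (z₀^2 - (s:ℂ)*z₀ + 1) = 0 := by
        rw [← hz]; push_cast [hsdef]; ring
      have h1 : z₀ - 1 ≠ 0 := sub_ne_zero.mpr h
      have hq : z₀^2 - (s:ℂ)*z₀ + 1 = 0 := by
        rcases mul_eq_zero.mp hfac with h' | h'
        · exact absurd h' h1
        · exact h'
      have := quad_aux s hs z₀ hq
      exact ⟨this.1, by rw [this.2]⟩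
end

section
/- Let n ≥ 1 and let N be the n×n nilpotent Jordan block, i.e. the matrix with N_{i,i+1} = 1 for 1 ≤ i ≤ n−1 and all other entries 0. Then the numerical range of N is the closed disk of radius cos(π/(n+1)) centered at the origin: W(N) = { z ∈ ℂ : |z| ≤ cos(π/(n+1)) }. In particular, the numerical radius of N is w(N) = cos(π/(n+1)). -/
open scoped InnerProductSpace ComplexConjugate

open Real Finset

-- sin positivity
lemma sinpos (n : ℕ) (hn : 1 ≤ n) {k : ℕ} (h1 : 1 ≤ k) (h2 : k ≤ n) :
    0 < Real.sin (k * (π / (n + 1))) := by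
  apply Real.sin_pos_of_pos_of_lt_pi
  · positivity
  · have hlt : (k : ℝ) < (n : ℝ) + 1 := by exact_mod_cast Nat.lt_succ_of_le h2
    calc (k:ℝ) * (π / (n+1)) < ((n:ℝ)+1) * (π / (n+1)) := by
          apply mul_lt_mul_of_pos_right hlt; positivity
      _ = π := by field_simp

-- trig identity
lemma trig (θ : ℝ) (k : ℕ) :
    Real.sin ((k+2) * θ) + Real.sin (k * θ) = 2 * Real.cos θ * Real.sin ((k+1) * θ) := by
  have h1 : ((k:ℝ)+2) * θ = (k+1)*θ + θ := by ring
  have h2 : (k:ℝ) * θ = (k+1)*θ - θ := by ring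
  rw [h1, h2, Real.sin_add, Real.sin_sub]; ring

lemma amgm (a b t : ℝ) (ht : 0 < t) : a * b ≤ t/2 * a^2 + 1/(2*t) * b^2 := by
  rw [← sub_nonneg]
  have h : t/2 * a^2 + 1/(2*t) * b^2 - a*b = (t*a - b)^2 / (2*t) := by field_simp; ring
  rw [h]; positivity

lemma sin_np1 (n : ℕ) : Real.sin (((n:ℝ)+1) * (π / (n + 1))) = 0 := by
  have : ((n:ℝ)+1) * (π / (n+1)) = π := by
    field_simp
  rw [this, Real.sin_pi]

lemma key_ineq (n : ℕ) (hn : 1 ≤ n) (b : ℕ → ℝ) (hb : ∀ k, 0 ≤ b k) (hbn : b n = 0) :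
    ∑ k ∈ range n, b k * b (k+1) ≤
      Real.cos (π / (n+1)) * ∑ k ∈ range n, (b k)^2 := by
  set θ := π / (n+1) with hθ
  set σ : ℕ → ℝ := fun k => Real.sin (k * θ) with hσ
  have hσpos : ∀ k, 1 ≤ k → k ≤ n → 0 < σ k := fun k h1 h2 => sinpos n hn h1 h2
  have hσ0 : σ 0 = 0 := by simp [hσ]
  have hσn1 : σ (n+1) = 0 := by
    have := sin_np1 n; simpa [hσ] using this
  -- termwise bound
  have hterm : ∀ k ∈ range n, b k * b (k+1) ≤
      σ (k+2)/(2*σ (k+1)) * (b k)^2 + σ (k+1)/(2*σ (k+2)) * (b (k+1))^2 := by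
    intro k hk
    rw [mem_range] at hk
    rcases eq_or_lt_of_le (Nat.succ_le_of_lt hk) with h | h
    · -- k+1 = n
      have hb1 : b (k+1) = 0 := by rw [show k+1 = n by omega, hbn]
      have hs1 : σ (k+2) = 0 := by
        have : k+2 = n+1 := by omega
        rw [this, hσn1]
      rw [hb1, hs1]
      have h1 : 0 < σ (k+1) := hσpos _ (by omega) (by omega)
      simp
    · -- k+2 ≤ n
      have h1 : 0 < σ (k+1) := hσpos _ (by omega) (by omega)
      have h2 : 0 < σ (k+2) := hσpos _ (by omega) (by omega)
      have := amgm (b k) (b (k+1)) (σ (k+2)/σ (k+1)) (by positivity)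
      calc b k * b (k+1) ≤ (σ (k+2)/σ (k+1))/2 * (b k)^2
            + 1/(2*(σ (k+2)/σ (k+1))) * (b (k+1))^2 := this
        _ = σ (k+2)/(2*σ (k+1)) * (b k)^2 + σ (k+1)/(2*σ (k+2)) * (b (k+1))^2 := by
            field_simp
  calc ∑ k ∈ range n, b k * b (k+1)
      ≤ ∑ k ∈ range n, (σ (k+2)/(2*σ (k+1)) * (b k)^2 + σ (k+1)/(2*σ (k+2)) * (b (k+1))^2) :=
        Finset.sum_le_sum hterm
    _ = ∑ k ∈ range n, σ (k+2)/(2*σ (k+1)) * (b k)^2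
        + ∑ k ∈ range n, σ (k+1)/(2*σ (k+2)) * (b (k+1))^2 := Finset.sum_add_distrib
    _ = ∑ k ∈ range n, σ (k+2)/(2*σ (k+1)) * (b k)^2
        + ∑ k ∈ range n, σ k/(2*σ (k+1)) * (b k)^2 := by
        congr 1
        have hshift : ∑ k ∈ range (n+1), σ k/(2*σ (k+1)) * (b k)^2
            = (∑ k ∈ range n, σ (k+1)/(2*σ (k+2)) * (b (k+1))^2)
              + σ 0/(2*σ 1) * (b 0)^2 := Finset.sum_range_succ' _ n
        have hsucc : ∑ k ∈ range (n+1), σ k/(2*σ (k+1)) * (b k)^2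
            = (∑ k ∈ range n, σ k/(2*σ (k+1)) * (b k)^2) + σ n/(2*σ (n+1)) * (b n)^2 :=
          Finset.sum_range_succ _ n
        rw [hsucc, hbn] at hshift
        rw [hσ0] at hshift
        simp at hshift
        linarith [hshift]
    _ = ∑ k ∈ range n, Real.cos θ * (b k)^2 := by
        rw [← Finset.sum_add_distrib]
        apply Finset.sum_congr rfl
        intro k hk
        rw [mem_range] at hk
        have h1 : 0 < σ (k+1) := hσpos _ (by omega) (by omega)
        have htr : σ (k+2) + σ k = 2 * Real.cos θ * σ (k+1) := by
          have := trig θ k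
          simpa [hσ, Nat.cast_add] using this
        field_simp
        nlinarith [htr]
    _ = Real.cos θ * ∑ k ∈ range n, (b k)^2 := by rw [Finset.mul_sum]

lemma key_eq (n : ℕ) (hn : 1 ≤ n) :
    ∑ k ∈ range n, Real.sin ((k+1) * (π/(n+1))) * Real.sin ((k+2) * (π/(n+1)))
      = Real.cos (π/(n+1)) * ∑ k ∈ range n, Real.sin ((k+1) * (π/(n+1)))^2 := by
  set θ := π / (n+1) with hθ
  set σ : ℕ → ℝ := fun k => Real.sin (k * θ) with hσ
  have hσ0 : σ 0 = 0 := by simp [hσ]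
  have hσn1 : σ (n+1) = 0 := by have := sin_np1 n; simpa [hσ] using this
  have hshift : ∑ k ∈ range n, σ k * σ (k+1) = ∑ k ∈ range n, σ (k+1) * σ (k+2) := by
    have h1 : ∑ k ∈ range (n+1), σ k * σ (k+1)
        = (∑ k ∈ range n, σ (k+1) * σ (k+2)) + σ 0 * σ 1 := Finset.sum_range_succ' _ n
    have h2 : ∑ k ∈ range (n+1), σ k * σ (k+1)
        = (∑ k ∈ range n, σ k * σ (k+1)) + σ n * σ (n+1) := Finset.sum_range_succ _ n
    rw [hσ0] at h1; rw [hσn1] at h2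
    simp at h1 h2; linarith
  have key : ∀ k, σ (k+1) * σ (k+2) + σ k * σ (k+1) = 2 * Real.cos θ * σ (k+1)^2 := by
    intro k
    have := trig θ k
    have h : σ (k+2) + σ k = 2 * Real.cos θ * σ (k+1) := by
      simpa [hσ, Nat.cast_add] using this
    calc σ (k+1) * σ (k+2) + σ k * σ (k+1) = (σ (k+2) + σ k) * σ (k+1) := by ring
      _ = (2 * Real.cos θ * σ (k+1)) * σ (k+1) := by rw [h]
      _ = 2 * Real.cos θ * σ (k+1)^2 := by ring
  have h3 : ∑ k ∈ range n, (σ (k+1) * σ (k+2) + σ k * σ (k+1))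
      = ∑ k ∈ range n, 2 * Real.cos θ * σ (k+1)^2 := by
    exact Finset.sum_congr rfl fun k _ => key k
  rw [Finset.sum_add_distrib, ← hshift] at h3
  have e1 : ∀ k : ℕ, σ (k+1) = Real.sin (((k:ℝ)+1) * θ) := by
    intro k; simp [hσ, Nat.cast_add]
  have e2 : ∀ k : ℕ, σ (k+2) = Real.sin (((k:ℝ)+2) * θ) := by
    intro k; simp [hσ, Nat.cast_add]
  simp only [← e1, ← e2]
  rw [Finset.mul_sum]
  have h4 : ∑ k ∈ range n, 2 * Real.cos θ * σ (k+1)^2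
      = 2 * ∑ k ∈ range n, Real.cos θ * σ (k+1)^2 := by
    rw [Finset.mul_sum]; apply Finset.sum_congr rfl; intro k _; ring
  rw [h4] at h3
  linarith

open scoped InnerProductSpace ComplexConjugate

noncomputable def Xext {n : ℕ} (x : EuclideanSpace ℂ (Fin n)) : ℕ → ℂ :=
  fun k => if h : k < n then x ⟨k, h⟩ else 0

lemma mulVec_jordan (n : ℕ) (N : Matrix (Fin n) (Fin n) ℂ)
    (hN : ∀ i j : Fin n, N i j = if (i : ℕ) + 1 = (j : ℕ) then 1 else 0)
    (x : EuclideanSpace ℂ (Fin n)) (i : Fin n) :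
    Matrix.mulVec N (fun j => x j) i = Xext x ((i:ℕ)+1) := by
  unfold Matrix.mulVec dotProduct Xext
  by_cases h : (i:ℕ)+1 < n
  · rw [dif_pos h]
    rw [Finset.sum_eq_single (⟨(i:ℕ)+1, h⟩ : Fin n)]
    · simp only []; rw [hN]; simp
    · intro j _ hj
      simp only []; rw [hN]
      have : ¬ ((i:ℕ)+1 = (j:ℕ)) := by
        intro hc; apply hj; apply Fin.ext; simp [← hc]
      simp [this]
    · intro hc; exact absurd (Finset.mem_univ _) hc
  · rw [dif_neg h]
    apply Finset.sum_eq_zero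
    intro j _
    simp only []; rw [hN]
    have : ¬ ((i:ℕ)+1 = (j:ℕ)) := by
      intro hc; exact h (hc ▸ j.2)
    simp [this]

lemma inner_formula (n : ℕ) (N : Matrix (Fin n) (Fin n) ℂ)
    (hN : ∀ i j : Fin n, N i j = if (i : ℕ) + 1 = (j : ℕ) then 1 else 0)
    (x : EuclideanSpace ℂ (Fin n)) :
    ⟪x, Matrix.toEuclideanLin N x⟫_ℂ = ∑ k ∈ range n, conj (Xext x k) * Xext x (k+1) := by
  have h1 : ⟪x, Matrix.toEuclideanLin N x⟫_ℂ
      = ∑ i : Fin n, conj (x i) * (Matrix.toEuclideanLin N x) i := by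
    rw [PiLp.inner_apply]
    exact Finset.sum_congr rfl fun i _ => RCLike.inner_apply' _ _
  rw [h1]
  have h2 : ∀ i : Fin n, (Matrix.toEuclideanLin N x) i = Xext x ((i:ℕ)+1) := by
    intro i
    rw [Matrix.toEuclideanLin_apply]
    exact mulVec_jordan n N hN x i
  have h3 : ∀ i : Fin n, conj (x i) * (Matrix.toEuclideanLin N x) i
      = conj (Xext x (i:ℕ)) * Xext x ((i:ℕ)+1) := by
    intro i
    rw [h2]
    congr 2
    unfold Xext
    rw [dif_pos i.2]
  simp only [h3]
  exact Fin.sum_univ_eq_sum_range (fun k => conj (Xext x k) * Xext x (k+1)) n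

lemma norm_formula (n : ℕ) (x : EuclideanSpace ℂ (Fin n)) (hx : ‖x‖ = 1) :
    ∑ k ∈ range n, ‖Xext x k‖ ^ 2 = 1 := by
  have h1 : ∑ i : Fin n, ‖x i‖ ^ 2 = 1 := by
    have := EuclideanSpace.norm_eq x
    rw [hx] at this
    have h2 : Real.sqrt (∑ i : Fin n, ‖x i‖^2) = 1 := this.symm
    rwa [Real.sqrt_eq_one] at h2
  rw [← h1]
  rw [← Fin.sum_univ_eq_sum_range (fun k => ‖Xext x k‖ ^ 2) n]
  apply Finset.sum_congr rfl
  intro i _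
  unfold Xext
  rw [dif_pos i.2]

lemma upper_bound (n : ℕ) (hn : 1 ≤ n) (N : Matrix (Fin n) (Fin n) ℂ)
    (hN : ∀ i j : Fin n, N i j = if (i : ℕ) + 1 = (j : ℕ) then 1 else 0)
    (z : ℂ) (hz : z ∈ numRange N) : ‖z‖ ≤ Real.cos (π / (n+1)) := by
  obtain ⟨x, hx, hinner⟩ := hz
  rw [← hinner, inner_formula n N hN x]
  set b : ℕ → ℝ := fun k => ‖Xext x k‖ with hbdef
  have hb : ∀ k, 0 ≤ b k := fun k => norm_nonneg _
  have hbn : b n = 0 := by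
    simp [hbdef, Xext]
  calc ‖∑ k ∈ range n, conj (Xext x k) * Xext x (k+1)‖
      ≤ ∑ k ∈ range n, ‖conj (Xext x k) * Xext x (k+1)‖ :=
        norm_sum_le _ _
    _ = ∑ k ∈ range n, b k * b (k+1) := by
        apply Finset.sum_congr rfl; intro k _
        rw [norm_mul, Complex.norm_conj]
    _ ≤ Real.cos (π/(n+1)) * ∑ k ∈ range n, (b k)^2 := key_ineq n hn b hb hbn
    _ = Real.cos (π/(n+1)) * 1 := by
        congr 1
        have := norm_formula n x hx
        simpa [hbdef] using this
    _ = Real.cos (π/(n+1)) := mul_one _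

lemma mem_range_of (n : ℕ) (hn : 1 ≤ n) (N : Matrix (Fin n) (Fin n) ℂ)
    (hN : ∀ i j : Fin n, N i j = if (i : ℕ) + 1 = (j : ℕ) then 1 else 0)
    (b : ℕ → ℝ) (hb : ∀ k, 0 ≤ b k) (hbn : ∀ k, n ≤ k → b k = 0)
    (hQ : ∑ k ∈ range n, (b k)^2 = 1) (ω : ℂ) (hω : ‖ω‖ = 1) :
    ω * ((∑ k ∈ range n, b k * b (k+1) : ℝ) : ℂ) ∈ numRange N := by
  set x : EuclideanSpace ℂ (Fin n) := WithLp.toLp 2 (fun i => ω^(i:ℕ) * (b (i:ℕ) : ℂ)) with hxdef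
  have hXe : ∀ k, Xext x k = ω^k * (b k : ℂ) := by
    intro k
    unfold Xext
    by_cases h : k < n
    · rw [dif_pos h]
    · rw [dif_neg h, hbn k (le_of_not_gt h)]
      simp
  have hnorm : ‖x‖ = 1 := by
    rw [EuclideanSpace.norm_eq]
    rw [show (1:ℝ) = Real.sqrt 1 from (Real.sqrt_one).symm]
    congr 1
    rw [← hQ, ← Fin.sum_univ_eq_sum_range (fun k => (b k)^2) n]
    apply Finset.sum_congr rfl
    intro i _
    have : ‖x i‖ = b (i:ℕ) := by
      rw [hxdef]
      simp only []
      rw [norm_mul, norm_pow]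
      have h1 : ‖ω‖ = 1 := hω
      rw [h1, one_pow, one_mul, Complex.norm_real]
      exact abs_of_nonneg (hb _)
    rw [this]
  refine ⟨x, hnorm, ?_⟩
  rw [inner_formula n N hN x]
  have hω2 : (starRingEnd ℂ) ω * ω = 1 := by
    have := Complex.mul_conj ω
    rw [mul_comm] at this
    rw [this]
    rw [← Complex.sq_norm, hω]
    norm_num
  have hterm : ∀ k, conj (Xext x k) * Xext x (k+1)
      = ω * ((b k * b (k+1) : ℝ) : ℂ) := by
    intro k
    rw [hXe, hXe]
    rw [map_mul, map_pow]
    push_cast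
    rw [Complex.conj_ofReal]
    have hcc : (starRingEnd ℂ) ω ^ k * ω ^ (k+1) = ω := by
      rw [pow_succ]
      rw [show (starRingEnd ℂ) ω ^ k * (ω ^ k * ω) = ((starRingEnd ℂ) ω * ω)^k * ω by ring]
      rw [hω2, one_pow, one_mul]
    calc (starRingEnd ℂ) ω ^ k * (b k : ℂ) * (ω ^ (k+1) * (b (k+1) : ℂ))
        = ((starRingEnd ℂ) ω ^ k * ω ^ (k+1)) * ((b k : ℂ) * (b (k+1):ℂ)) := by ring
      _ = ω * ((b k : ℂ) * (b (k+1):ℂ)) := by rw [hcc]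
  simp only [hterm]
  rw [← Finset.mul_sum]
  congr 1
  push_cast
  rfl

lemma lower_bound (n : ℕ) (hn : 1 ≤ n) (N : Matrix (Fin n) (Fin n) ℂ)
    (hN : ∀ i j : Fin n, N i j = if (i : ℕ) + 1 = (j : ℕ) then 1 else 0)
    (z : ℂ) (hz : ‖z‖ ≤ Real.cos (π / (n+1))) : z ∈ numRange N := by
  set θ := π / (n+1) with hθ
  set σ : ℕ → ℝ := fun k => Real.sin (k * θ) with hσ
  have hσpos : ∀ k, 1 ≤ k → k ≤ n → 0 < σ k := fun k h1 h2 => sinpos n hn h1 h2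
  set bf : ℝ → ℕ → ℝ := fun t k =>
    if k < n then ((1-t) * (if k = 0 then 1 else 0) + t * σ (k+1)) else 0 with hbf
  set P : ℝ → ℝ := fun t => ∑ k ∈ range n, bf t k * bf t (k+1) with hP
  set Q : ℝ → ℝ := fun t => ∑ k ∈ range n, (bf t k)^2 with hQ
  have hσ1 : 0 < σ 1 := hσpos 1 le_rfl hn
  have hbn0 : ∀ t k, n ≤ k → bf t k = 0 := by
    intro t k hk; simp [hbf, Nat.not_lt.mpr hk]
  have hbnonneg : ∀ t, t ∈ Set.Icc (0:ℝ) 1 → ∀ k, 0 ≤ bf t k := by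
    intro t ht k
    simp only [hbf]
    by_cases h : k < n
    · rw [if_pos h]
      have h1 : 0 ≤ (1-t) * (if k = 0 then 1 else 0) := by
        apply mul_nonneg (by linarith [ht.2]); positivity
      have h2 : 0 ≤ t * σ (k+1) := mul_nonneg ht.1 (le_of_lt (hσpos (k+1) (by omega) (by omega)))
      linarith
    · rw [if_neg h]
  have hb0pos : ∀ t, t ∈ Set.Icc (0:ℝ) 1 → 0 < bf t 0 := by
    intro t ht
    have hbeq : bf t 0 = (1-t) + t * σ 1 := by
      simp [hbf, show 0 < n from hn]
    rw [hbeq]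
    rcases eq_or_lt_of_le ht.1 with h | h
    · rw [← h]; norm_num
    · have : 0 < t * σ 1 := mul_pos h hσ1
      linarith [ht.2]
  have hQpos : ∀ t, t ∈ Set.Icc (0:ℝ) 1 → 0 < Q t := by
    intro t ht
    have h1 : (bf t 0)^2 ≤ Q t := by
      apply Finset.single_le_sum (f := fun k => (bf t k)^2)
      · intro k _; positivity
      · simp [mem_range]; omega
    have := hb0pos t ht
    nlinarith
  have hcontb : ∀ k, Continuous (fun t => bf t k) := by
    intro k
    simp only [hbf]
    by_cases h : k < n
    · simp only [if_pos h]; fun_prop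
    · simp only [if_neg h]; fun_prop
  have hcontP : Continuous P := by
    apply continuous_finset_sum
    intro k _
    exact (hcontb k).mul (hcontb (k+1))
  have hcontQ : Continuous Q := by
    apply continuous_finset_sum
    intro k _
    exact (hcontb k).pow 2
  set f : ℝ → ℝ := fun t => P t / Q t with hf
  have hcontf : ContinuousOn f (Set.Icc 0 1) := by
    apply ContinuousOn.div hcontP.continuousOn hcontQ.continuousOn
    intro t ht
    exact ne_of_gt (hQpos t ht)
  have hf0 : f 0 = 0 := by
    have hP0 : P 0 = 0 := by
      apply Finset.sum_eq_zero
      intro k _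
      have : bf 0 (k+1) = 0 := by
        simp only [hbf]
        by_cases h : k+1 < n
        · simp [if_pos h]
        · simp [if_neg h]
      rw [this, mul_zero]
    simp [hf, hP0]
  have hf1 : f 1 = Real.cos θ := by
    have hb1 : ∀ k, bf 1 k = if k < n then σ (k+1) else 0 := by
      intro k
      simp only [hbf]
      by_cases h : k < n
      · simp [if_pos h]
      · simp [if_neg h]
    have hP1 : P 1 = Real.cos θ * Q 1 := by
      have e1 : P 1 = ∑ k ∈ range n, Real.sin (((k:ℝ)+1) * θ) * Real.sin (((k:ℝ)+2) * θ) := by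
        apply Finset.sum_congr rfl
        intro k hk
        rw [mem_range] at hk
        rw [hb1, hb1, if_pos hk]
        by_cases h : k+1 < n
        · rw [if_pos h]
          simp only [hσ]
          push_cast
          ring_nf
        · rw [if_neg h]
          have hsin0 : Real.sin (((k:ℝ)+2) * θ) = 0 := by
            have hk1 : (k:ℝ) + 2 = (n:ℝ) + 1 := by
              have : k + 1 = n := by omega
              have h2 := congrArg (Nat.cast (R := ℝ)) this
              push_cast at h2
              linarith
            rw [hk1, hθ]
            exact sin_np1 n
          simp [hsin0]
      have e2 : Q 1 = ∑ k ∈ range n, Real.sin (((k:ℝ)+1) * θ)^2 := by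
        apply Finset.sum_congr rfl
        intro k hk
        rw [mem_range] at hk
        rw [hb1, if_pos hk]
        simp only [hσ]
        push_cast
        ring_nf
      rw [e1, e2, hθ]
      exact key_eq n hn
    have hQ1 : Q 1 ≠ 0 := ne_of_gt (hQpos 1 (by norm_num))
    rw [hf]
    simp only []
    rw [hP1]
    field_simp
  set r := ‖z‖ with hr
  have hr0 : 0 ≤ r := norm_nonneg z
  have hrc : r ≤ Real.cos θ := hz
  have hivt : r ∈ f '' Set.Icc 0 1 := by
    apply intermediate_value_Icc (by norm_num : (0:ℝ) ≤ 1) hcontf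
    rw [hf0, hf1]
    exact ⟨hr0, hrc⟩
  obtain ⟨t, ht01, hft⟩ := hivt
  set s := Real.sqrt (Q t) with hs
  have hQt : 0 < Q t := hQpos t ht01
  have hspos : 0 < s := Real.sqrt_pos.mpr hQt
  have hs2 : s^2 = Q t := Real.sq_sqrt (le_of_lt hQt)
  set b' : ℕ → ℝ := fun k => bf t k / s with hb'
  have hb'nonneg : ∀ k, 0 ≤ b' k := fun k => div_nonneg (hbnonneg t ht01 k) (le_of_lt hspos)
  have hb'n : ∀ k, n ≤ k → b' k = 0 := by
    intro k hk; simp [hb', hbn0 t k hk]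
  have hQ' : ∑ k ∈ range n, (b' k)^2 = 1 := by
    simp only [hb', div_pow]
    rw [← Finset.sum_div, hs2]
    exact div_self (ne_of_gt hQt)
  have hsum' : ∑ k ∈ range n, b' k * b' (k+1) = r := by
    have e : ∀ k, b' k * b' (k+1) = bf t k * bf t (k+1) / s^2 := by
      intro k
      simp only [hb']
      rw [div_mul_div_comm, sq]
    simp only [e]
    rw [← Finset.sum_div, hs2]
    exact hft
  set ω : ℂ := if r = 0 then 1 else z / (r:ℂ) with hω
  have hωabs : ‖ω‖ = 1 := by
    by_cases h : r = 0
    · simp [hω, h]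
    · rw [hω, if_neg h]
      rw [norm_div]
      rw [← hr]
      rw [Complex.norm_of_nonneg hr0]
      exact div_self h
  have hωr : ω * (r:ℂ) = z := by
    by_cases h : r = 0
    · have hz0 : z = 0 := by
        have h2 : ‖z‖ = 0 := by rw [← hr]; exact h
        exact norm_eq_zero.mp h2
      rw [hz0, h]; simp
    · rw [hω, if_neg h]
      have : (r:ℂ) ≠ 0 := by exact_mod_cast h
      field_simp
  have hmem := mem_range_of n hn N hN b' hb'nonneg hb'n hQ' ω hωabs
  rw [hsum', hωr] at hmem
  exact hmem

/-- For the `n×n` nilpotent Jordan block `N`, the numerical range is the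
closed disk of radius `cos(π/(n+1))` centered at the origin, and in particular
`w(N) = cos(π/(n+1))`. -/
theorem numRange_jordan_block
    (n : ℕ) (hn : 1 ≤ n)
    (N : Matrix (Fin n) (Fin n) ℂ)
    (hN : ∀ i j : Fin n, N i j = if (i : ℕ) + 1 = (j : ℕ) then 1 else 0) :
    numRange N = { z : ℂ | ‖z‖ ≤ Real.cos (Real.pi / (n + 1)) } ∧
      numRadius N = Real.cos (Real.pi / (n + 1)) := by
  set c := Real.cos (Real.pi / (n + 1)) with hc
  have hc0 : 0 ≤ c := by
    apply Real.cos_nonneg_of_mem_Icc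
    constructor
    · have : 0 ≤ Real.pi / ((n:ℝ)+1) := by positivity
      linarith [Real.pi_pos]
    · apply div_le_div_of_nonneg_left Real.pi_pos.le (by norm_num)
      have : (1:ℝ) ≤ (n:ℝ) := by exact_mod_cast hn
      linarith
  have hset : numRange N = { z : ℂ | ‖z‖ ≤ c } := by
    ext z
    constructor
    · intro hz
      exact upper_bound n hn N hN z hz
    · intro hz
      exact lower_bound n hn N hN z hz
  refine ⟨hset, ?_⟩
  have himg : (fun z : ℂ => ‖z‖) '' { z : ℂ | ‖z‖ ≤ c } = Set.Icc 0 c := by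
    ext r
    simp only [Set.mem_image, Set.mem_setOf_eq, Set.mem_Icc]
    constructor
    · rintro ⟨w, hw, rfl⟩
      exact ⟨norm_nonneg w, hw⟩
    · rintro ⟨h0, h1⟩
      refine ⟨(r:ℂ), ?_, ?_⟩
      · rw [Complex.norm_of_nonneg h0]; exact h1
      · rw [Complex.norm_of_nonneg h0]
  rw [numRadius, hset, himg]
  exact csSup_Icc hc0
end

section
/- Let a, b, c ∈ (−1, 1) be real. Then every complex root z₀ of the quartic equation z(z−a)(z−b)(z−c) + (1−az)(1−bz)(1−cz) = 0 satisfies |z₀| = 1 and 2(Re z₀)² − (a + b + c + abc)·(Re z₀) + (ab + ac + bc − 1) = 0. -/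
set_option maxHeartbeats 1000000

private lemma aux_fg_lt {d x y : ℝ} (hd1 : -1 < d) (hd2 : d < 1)
    (ht : x ^ 2 + y ^ 2 < 1) :
    (x - d) ^ 2 + y ^ 2 < (1 - d * x) ^ 2 + d ^ 2 * y ^ 2 := by
  have hp : (0:ℝ) < (1 - d ^ 2) * (1 - (x ^ 2 + y ^ 2)) :=
    mul_pos (by nlinarith) (by linarith)
  nlinarith

private lemma aux_gf_lt {d x y : ℝ} (hd1 : -1 < d) (hd2 : d < 1)
    (ht : 1 < x ^ 2 + y ^ 2) :
    (1 - d * x) ^ 2 + d ^ 2 * y ^ 2 < (x - d) ^ 2 + y ^ 2 := by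
  have hp : (0:ℝ) < (1 - d ^ 2) * ((x ^ 2 + y ^ 2) - 1) :=
    mul_pos (by nlinarith) (by linarith)
  nlinarith

private lemma aux_t_eq_one (a b c x y : ℝ)
    (ha1 : -1 < a) (ha2 : a < 1) (hb1 : -1 < b) (hb2 : b < 1)
    (hc1 : -1 < c) (hc2 : c < 1)
    (E : (x ^ 2 + y ^ 2) * (((x - a) ^ 2 + y ^ 2) * ((x - b) ^ 2 + y ^ 2) * ((x - c) ^ 2 + y ^ 2))
      = ((1 - a * x) ^ 2 + a ^ 2 * y ^ 2) * ((1 - b * x) ^ 2 + b ^ 2 * y ^ 2)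
        * ((1 - c * x) ^ 2 + c ^ 2 * y ^ 2)) :
    x ^ 2 + y ^ 2 = 1 := by
  rcases lt_trichotomy (x ^ 2 + y ^ 2) 1 with hlt | heq1 | hgt
  · exfalso
    have hfa := aux_fg_lt ha1 ha2 hlt
    have hfb := aux_fg_lt hb1 hb2 hlt
    have hfc := aux_fg_lt hc1 hc2 hlt
    have hna : (0:ℝ) ≤ (x - a) ^ 2 + y ^ 2 := by positivity
    have hnb : (0:ℝ) ≤ (x - b) ^ 2 + y ^ 2 := by positivity
    have hnc : (0:ℝ) ≤ (x - c) ^ 2 + y ^ 2 := by positivity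
    have hprod : ((x - a) ^ 2 + y ^ 2) * ((x - b) ^ 2 + y ^ 2) * ((x - c) ^ 2 + y ^ 2)
        < ((1 - a * x) ^ 2 + a ^ 2 * y ^ 2) * ((1 - b * x) ^ 2 + b ^ 2 * y ^ 2)
          * ((1 - c * x) ^ 2 + c ^ 2 * y ^ 2) :=
      mul_lt_mul'' (mul_lt_mul'' hfa hfb hna hnb) hfc (mul_nonneg hna hnb) hnc
    have htnn : (0:ℝ) ≤ x ^ 2 + y ^ 2 := by positivity
    have hF : (0:ℝ) ≤ ((x - a) ^ 2 + y ^ 2) * ((x - b) ^ 2 + y ^ 2) * ((x - c) ^ 2 + y ^ 2) :=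
      mul_nonneg (mul_nonneg hna hnb) hnc
    have hle : (x ^ 2 + y ^ 2) * (((x - a) ^ 2 + y ^ 2) * ((x - b) ^ 2 + y ^ 2) * ((x - c) ^ 2 + y ^ 2))
        ≤ 1 * (((x - a) ^ 2 + y ^ 2) * ((x - b) ^ 2 + y ^ 2) * ((x - c) ^ 2 + y ^ 2)) :=
      mul_le_mul_of_nonneg_right hlt.le hF
    linarith
  · exact heq1
  · exfalso
    have hfa := aux_gf_lt ha1 ha2 hgt
    have hfb := aux_gf_lt hb1 hb2 hgt
    have hfc := aux_gf_lt hc1 hc2 hgt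
    have hna : (0:ℝ) ≤ (1 - a * x) ^ 2 + a ^ 2 * y ^ 2 := by positivity
    have hnb : (0:ℝ) ≤ (1 - b * x) ^ 2 + b ^ 2 * y ^ 2 := by positivity
    have hnc : (0:ℝ) ≤ (1 - c * x) ^ 2 + c ^ 2 * y ^ 2 := by positivity
    have hprod : ((1 - a * x) ^ 2 + a ^ 2 * y ^ 2) * ((1 - b * x) ^ 2 + b ^ 2 * y ^ 2)
          * ((1 - c * x) ^ 2 + c ^ 2 * y ^ 2)
        < ((x - a) ^ 2 + y ^ 2) * ((x - b) ^ 2 + y ^ 2) * ((x - c) ^ 2 + y ^ 2) :=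
      mul_lt_mul'' (mul_lt_mul'' hfa hfb hna hnb) hfc (mul_nonneg hna hnb) hnc
    have hfpos : (0:ℝ) ≤ ((x - a) ^ 2 + y ^ 2) * ((x - b) ^ 2 + y ^ 2) * ((x - c) ^ 2 + y ^ 2) :=
      (mul_nonneg (mul_nonneg hna hnb) hnc).trans hprod.le
    have hle : 1 * (((x - a) ^ 2 + y ^ 2) * ((x - b) ^ 2 + y ^ 2) * ((x - c) ^ 2 + y ^ 2))
        ≤ (x ^ 2 + y ^ 2) * (((x - a) ^ 2 + y ^ 2) * ((x - b) ^ 2 + y ^ 2) * ((x - c) ^ 2 + y ^ 2)) :=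
      mul_le_mul_of_nonneg_right hgt.le hfpos
    linarith

/-- For real `a, b, c ∈ (-1,1)`, every complex root of
`z(z−a)(z−b)(z−c) + (1−az)(1−bz)(1−cz) = 0` has modulus `1` and its real part `x`
satisfies `2x² − (a+b+c+abc)x + (ab+ac+bc−1) = 0`. -/
theorem roots_deg_three_quartic
    (a b c : ℝ) (ha : a ∈ Set.Ioo (-1 : ℝ) 1) (hb : b ∈ Set.Ioo (-1 : ℝ) 1)
    (hc : c ∈ Set.Ioo (-1 : ℝ) 1) :
    ∀ z₀ : ℂ,
      z₀ * (z₀ - a) * (z₀ - b) * (z₀ - c) + (1 - a * z₀) * (1 - b * z₀) * (1 - c * z₀) = 0 →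
      ‖z₀‖ = 1 ∧
        2 * z₀.re ^ 2 - (a + b + c + a * b * c) * z₀.re + (a * b + a * c + b * c - 1) = 0 := by
  obtain ⟨ha1, ha2⟩ := ha
  obtain ⟨hb1, hb2⟩ := hb
  obtain ⟨hc1, hc2⟩ := hc
  intro z heq
  have hAB : z * (z - a) * (z - b) * (z - c) = -((1 - a * z) * (1 - b * z) * (1 - c * z)) := by
    linear_combination heq
  have hns : Complex.normSq (z * (z - a) * (z - b) * (z - c))
      = Complex.normSq ((1 - a * z) * (1 - b * z) * (1 - c * z)) := by
    rw [hAB, Complex.normSq_neg]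
  have hf : ∀ d : ℝ, Complex.normSq (z - d) = (z.re - d) ^ 2 + z.im ^ 2 := by
    intro d
    simp [Complex.normSq_apply, Complex.sub_re, Complex.sub_im]
    ring
  have hg : ∀ d : ℝ, Complex.normSq (1 - d * z) = (1 - d * z.re) ^ 2 + d ^ 2 * z.im ^ 2 := by
    intro d
    simp [Complex.normSq_apply, Complex.sub_re, Complex.sub_im, Complex.mul_re, Complex.mul_im]
    ring
  have hzns : Complex.normSq z = z.re ^ 2 + z.im ^ 2 := by
    simp [Complex.normSq_apply]; ring
  have E : (z.re ^ 2 + z.im ^ 2) * (((z.re - a) ^ 2 + z.im ^ 2) * ((z.re - b) ^ 2 + z.im ^ 2)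
        * ((z.re - c) ^ 2 + z.im ^ 2))
      = ((1 - a * z.re) ^ 2 + a ^ 2 * z.im ^ 2) * ((1 - b * z.re) ^ 2 + b ^ 2 * z.im ^ 2)
        * ((1 - c * z.re) ^ 2 + c ^ 2 * z.im ^ 2) := by
    have h := hns
    simp only [Complex.normSq_mul] at h
    rw [hzns, hf a, hf b, hf c, hg a, hg b, hg c] at h
    linear_combination h
  have ht1 : z.re ^ 2 + z.im ^ 2 = 1 :=
    aux_t_eq_one a b c z.re z.im ha1 ha2 hb1 hb2 hc1 hc2 E
  have habs : ‖z‖ = 1 := by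
    have h2 : ‖z‖ ^ 2 = 1 := by rw [Complex.sq_norm, hzns]; linarith
    nlinarith [norm_nonneg z]
  refine ⟨habs, ?_⟩
  have hz0 : z ≠ 0 := by
    intro h; rw [h] at habs; simp at habs
  have hw : z * (starRingEnd ℂ) z = 1 := by
    rw [Complex.mul_conj]
    norm_cast
    rw [hzns]; linarith
  have hx : 2 * (z.re : ℂ) = z + (starRingEnd ℂ) z := by
    have h := Complex.add_conj z; push_cast at h; linear_combination h.symm
  have key : (2 * (z.re:ℂ) ^ 2 - ((a:ℂ) + b + c + a * b * c) * z.re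
      + ((a:ℂ) * b + a * c + b * c - 1)) * (2 * z ^ 2) = 0 := by
    linear_combination heq
      + (2*z^2 + (starRingEnd ℂ) z * z + 1 - ((a:ℂ)+b+c+a*b*c)*z) * hw
      + ((2*(z.re:ℂ) + z + (starRingEnd ℂ) z - ((a:ℂ)+b+c+a*b*c)) * z^2) * hx
  have hz2 : (2 : ℂ) * z ^ 2 ≠ 0 := by
    simp [pow_eq_zero_iff, hz0]
  have key2 : (2 * (z.re:ℂ) ^ 2 - ((a:ℂ) + b + c + a * b * c) * z.re
      + ((a:ℂ) * b + a * c + b * c - 1)) = 0 :=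
    (mul_eq_zero.mp key).resolve_right hz2
  have hfin : ((2 * z.re ^ 2 - (a + b + c + a * b * c) * z.re
      + (a * b + a * c + b * c - 1) : ℝ) : ℂ) = 0 := by
    push_cast
    linear_combination key2
  exact_mod_cast hfin
end

section
/- Let a, b, c, d ∈ (−1, 1) be real. Set α = −1 + a + b + c + d + abcd and 2β = (−1+c)(−1+d) + b(−1+c+d+cd) + a(−1+c+d+cd + b(1+c+d−cd)). Then z = 1 is a root of the quintic z(z−a)(z−b)(z−c)(z−d) − (1−az)(1−bz)(1−cz)(1−dz) = 0, and every other complex root z₀ satisfies |z₀| = 1 and 2(Re z₀)² − α·(Re z₀) + (β − 1) = 0. -/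
lemma normSq_diff' (t : ℝ) (z : ℂ) :
    Complex.normSq (1 - t * z) - Complex.normSq (z - t) =
      (1 - t ^ 2) * (1 - Complex.normSq z) := by
  simp [Complex.normSq_apply]
  ring

lemma abs_eq_one_of_root (a b c d : ℝ) (ha : a ∈ Set.Ioo (-1 : ℝ) 1)
    (hb : b ∈ Set.Ioo (-1 : ℝ) 1) (hc : c ∈ Set.Ioo (-1 : ℝ) 1)
    (hd : d ∈ Set.Ioo (-1 : ℝ) 1) (z₀ : ℂ)
    (hz : z₀ * (z₀ - a) * (z₀ - b) * (z₀ - c) * (z₀ - d) =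
      (1 - a * z₀) * (1 - b * z₀) * (1 - c * z₀) * (1 - d * z₀)) :
    Complex.normSq z₀ = 1 := by
  obtain ⟨ha1, ha2⟩ := ha; obtain ⟨hb1, hb2⟩ := hb
  obtain ⟨hc1, hc2⟩ := hc; obtain ⟨hd1, hd2⟩ := hd
  set n := Complex.normSq z₀ with hn
  have habs : ‖z₀‖ * ‖z₀ - a‖ * ‖z₀ - b‖ *
      ‖z₀ - c‖ * ‖z₀ - d‖ =
      ‖1 - a * z₀‖ * ‖1 - b * z₀‖ * ‖1 - c * z₀‖ *
      ‖1 - d * z₀‖ := by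
    have := congrArg norm hz
    simpa [map_mul] using this
  have hkey : ∀ t : ℝ, -1 < t → t < 1 →
      Complex.normSq (1 - t * z₀) - Complex.normSq (z₀ - t) = (1 - t ^ 2) * (1 - n) :=
    fun t _ _ => normSq_diff' t z₀
  rcases lt_trichotomy n 1 with h | h | h
  · exfalso
    have step : ∀ t : ℝ, -1 < t → t < 1 →
        ‖z₀ - t‖ < ‖1 - t * z₀‖ := by
      intro t h1 h2
      have hsq : ‖z₀ - t‖ ^ 2 < ‖1 - t * z₀‖ ^ 2 := by
        rw [Complex.sq_norm, Complex.sq_norm]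
        nlinarith [hkey t h1 h2, mul_pos (mul_pos (by linarith : (0:ℝ) < 1 - t)
          (by linarith : (0:ℝ) < 1 + t)) (by linarith : (0:ℝ) < 1 - n)]
      exact lt_of_pow_lt_pow_left₀ 2 (norm_nonneg _) hsq
    have h0 : ‖z₀‖ < 1 := by
      have : ‖z₀‖ ^ 2 < 1 ^ 2 := by rw [Complex.sq_norm]; simpa using h
      exact lt_of_pow_lt_pow_left₀ 2 zero_le_one this
    have s1 := step a ha1 ha2
    have s2 := step b hb1 hb2
    have s3 := step c hc1 hc2
    have s4 := step d hd1 hd2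
    have m1 : ‖z₀‖ * ‖z₀ - a‖ < 1 * ‖1 - a * z₀‖ :=
      mul_lt_mul'' h0 s1 (norm_nonneg _) (norm_nonneg _)
    have m2 := mul_lt_mul'' m1 s2 (mul_nonneg (norm_nonneg _) (norm_nonneg _))
      (norm_nonneg _)
    have m3 := mul_lt_mul'' m2 s3 (mul_nonneg (mul_nonneg (norm_nonneg _)
      (norm_nonneg _)) (norm_nonneg _)) (norm_nonneg _)
    have m4 := mul_lt_mul'' m3 s4 (mul_nonneg (mul_nonneg (mul_nonneg (norm_nonneg _)
      (norm_nonneg _)) (norm_nonneg _)) (norm_nonneg _))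
      (norm_nonneg _)
    rw [one_mul] at m4
    linarith [habs, m4]
  · exact h
  · exfalso
    have step : ∀ t : ℝ, -1 < t → t < 1 →
        ‖1 - t * z₀‖ < ‖z₀ - t‖ := by
      intro t h1 h2
      have hsq : ‖1 - t * z₀‖ ^ 2 < ‖z₀ - t‖ ^ 2 := by
        rw [Complex.sq_norm, Complex.sq_norm]
        nlinarith [hkey t h1 h2, mul_pos (mul_pos (by linarith : (0:ℝ) < 1 - t)
          (by linarith : (0:ℝ) < 1 + t)) (by linarith : (0:ℝ) < n - 1)]
      exact lt_of_pow_lt_pow_left₀ 2 (norm_nonneg _) hsq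
    have h0 : 1 < ‖z₀‖ := by
      have : 1 ^ 2 < ‖z₀‖ ^ 2 := by rw [Complex.sq_norm]; simpa using h
      exact lt_of_pow_lt_pow_left₀ 2 (norm_nonneg _) this
    have s1 := step a ha1 ha2
    have s2 := step b hb1 hb2
    have s3 := step c hc1 hc2
    have s4 := step d hd1 hd2
    have m1 : 1 * ‖1 - a * z₀‖ < ‖z₀‖ * ‖z₀ - a‖ :=
      mul_lt_mul'' h0 s1 zero_le_one (norm_nonneg _)
    have m2 := mul_lt_mul'' m1 s2 (mul_nonneg zero_le_one (norm_nonneg _))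
      (norm_nonneg _)
    have m3 := mul_lt_mul'' m2 s3 (by positivity) (norm_nonneg _)
    have m4 := mul_lt_mul'' m3 s4 (by positivity) (norm_nonneg _)
    rw [one_mul] at m4
    linarith [habs, m4]

lemma re_quadratic_of_quartic (α β : ℝ) (z₀ : ℂ)
    (hQ : z₀ ^ 4 - (α:ℂ) * z₀ ^ 3 + 2 * (β:ℂ) * z₀ ^ 2 - (α:ℂ) * z₀ + 1 = 0)
    (hn : Complex.normSq z₀ = 1) :
    2 * z₀.re ^ 2 - α * z₀.re + (β - 1) = 0 := by
  set x := z₀.re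
  set y := z₀.im
  have hxy : x ^ 2 + y ^ 2 = 1 := by
    simp [Complex.normSq_apply] at hn; nlinarith [hn]
  have hRe := congrArg Complex.re hQ
  have hIm := congrArg Complex.im hQ
  simp [pow_succ, Complex.mul_re, Complex.mul_im] at hRe hIm
  linear_combination (x^2 - 1/2) * hRe + x * y * hIm +
    (-((x^2-1/2)*(y^2+1-7*x^2+3*α*x-2*β) + x*y^2*(α-4*x) + 4*x^2*(2*x^2-α*x+β-1))) * hxy

/-- For real `a, b, c, d ∈ (-1,1)`, with
`α = −1 + a + b + c + d + abcd` and
`2β = (−1+c)(−1+d) + b(−1+c+d+cd) + a(−1+c+d+cd + b(1+c+d−cd))`,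
`z = 1` is a root of `z(z−a)(z−b)(z−c)(z−d) − (1−az)(1−bz)(1−cz)(1−dz) = 0`, and every
other root `z₀` satisfies `|z₀| = 1` and `2(Re z₀)² − α(Re z₀) + (β−1) = 0`. -/
theorem roots_deg_four_quintic_minus
    (a b c d : ℝ) (ha : a ∈ Set.Ioo (-1 : ℝ) 1) (hb : b ∈ Set.Ioo (-1 : ℝ) 1)
    (hc : c ∈ Set.Ioo (-1 : ℝ) 1) (hd : d ∈ Set.Ioo (-1 : ℝ) 1)
    (α β : ℝ)
    (hα : α = -1 + a + b + c + d + a * b * c * d)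
    (hβ : 2 * β = (-1 + c) * (-1 + d) + b * (-1 + c + d + c * d) +
      a * (-1 + c + d + c * d + b * (1 + c + d - c * d))) :
    ((1 : ℂ) * (1 - a) * (1 - b) * (1 - c) * (1 - d) -
        (1 - a * 1) * (1 - b * 1) * (1 - c * 1) * (1 - d * 1) = 0) ∧
    ∀ z₀ : ℂ,
      z₀ * (z₀ - a) * (z₀ - b) * (z₀ - c) * (z₀ - d) -
        (1 - a * z₀) * (1 - b * z₀) * (1 - c * z₀) * (1 - d * z₀) = 0 →
      z₀ ≠ 1 →
      ‖z₀‖ = 1 ∧ 2 * z₀.re ^ 2 - α * z₀.re + (β - 1) = 0 := by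
  constructor
  · ring
  · intro z₀ hz hne
    have hz' : z₀ * (z₀ - a) * (z₀ - b) * (z₀ - c) * (z₀ - d) =
        (1 - a * z₀) * (1 - b * z₀) * (1 - c * z₀) * (1 - d * z₀) := sub_eq_zero.mp hz
    have hn : Complex.normSq z₀ = 1 := abs_eq_one_of_root a b c d ha hb hc hd z₀ hz'
    have habs1 : ‖z₀‖ = 1 := by
      have h2 : ‖z₀‖ ^ 2 = 1 := by rw [Complex.sq_norm, hn]
      have h3 : (‖z₀‖ - 1) * (‖z₀‖ + 1) = 0 := by nlinarith [h2]
      rcases mul_eq_zero.mp h3 with h4 | h4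
      · linarith
      · nlinarith [norm_nonneg z₀]
    have hβ' : β = ((-1 + c) * (-1 + d) + b * (-1 + c + d + c * d) +
        a * (-1 + c + d + c * d + b * (1 + c + d - c * d))) / 2 := by linarith
    have hfac : z₀ * (z₀ - a) * (z₀ - b) * (z₀ - c) * (z₀ - d) -
        (1 - a * z₀) * (1 - b * z₀) * (1 - c * z₀) * (1 - d * z₀) =
        (z₀ - 1) * (z₀ ^ 4 - (α:ℂ) * z₀ ^ 3 + 2 * (β:ℂ) * z₀ ^ 2 - (α:ℂ) * z₀ + 1) := by
      rw [hα, hβ']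
      push_cast
      ring
    have hQ : z₀ ^ 4 - (α:ℂ) * z₀ ^ 3 + 2 * (β:ℂ) * z₀ ^ 2 - (α:ℂ) * z₀ + 1 = 0 := by
      have := hfac ▸ hz
      rcases mul_eq_zero.mp this with h4 | h4
      · exact absurd (sub_eq_zero.mp h4) hne
      · exact h4
    exact ⟨habs1, re_quadratic_of_quartic α β z₀ hQ hn⟩
end

section
/- Let a, b, c, d ∈ (−1, 1) be real. Set α = 1 + a + b + c + d − abcd and 2β = (1+c)(1+d) + b(1+c+d−cd) + a(1+c+d−cd − b(−1+c+d+cd)). Then z = −1 is a root of the quintic z(z−a)(z−b)(z−c)(z−d) + (1−az)(1−bz)(1−cz)(1−dz) = 0, and every other complex root z₀ satisfies |z₀| = 1 and 2(Re z₀)² − α·(Re z₀) + (β − 1) = 0. -/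
lemma blaschke_lt (a : ℝ) (ha : a ∈ Set.Ioo (-1 : ℝ) 1) (z : ℂ)
    (hz : ‖z‖ < 1) : ‖z - a‖ < ‖1 - a * z‖ := by
  obtain ⟨ha1, ha2⟩ := ha
  have hns : Complex.normSq z < 1 := by
    have := Complex.sq_norm z
    nlinarith [norm_nonneg z]
  have hdiff : Complex.normSq (1 - a * z) - Complex.normSq (z - a)
      = (1 - a ^ 2) * (1 - Complex.normSq z) := by
    simp [Complex.normSq_apply]
    ring
  have hpos : Complex.normSq (z - a) < Complex.normSq (1 - a * z) := by
    have h0 : (0:ℝ) < (1 - a ^ 2) * (1 - Complex.normSq z) :=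
      mul_pos (by nlinarith) (by linarith)
    linarith
  have h1 := Complex.sq_norm (z - a)
  have h2 := Complex.sq_norm (1 - a * z)
  nlinarith [norm_nonneg (z - a), norm_nonneg (1 - a * z)]

lemma blaschke_gt (a : ℝ) (ha : a ∈ Set.Ioo (-1 : ℝ) 1) (z : ℂ)
    (hz : 1 < ‖z‖) : ‖1 - a * z‖ < ‖z - a‖ := by
  obtain ⟨ha1, ha2⟩ := ha
  have hns : 1 < Complex.normSq z := by
    have := Complex.sq_norm z
    nlinarith [norm_nonneg z]
  have hdiff : Complex.normSq (z - a) - Complex.normSq (1 - a * z)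
      = (1 - a ^ 2) * (Complex.normSq z - 1) := by
    simp [Complex.normSq_apply]
    ring
  have hpos : Complex.normSq (1 - a * z) < Complex.normSq (z - a) := by
    have h0 : (0:ℝ) < (1 - a ^ 2) * (Complex.normSq z - 1) :=
      mul_pos (by nlinarith) (by linarith)
    linarith
  have h1 := Complex.sq_norm (z - a)
  have h2 := Complex.sq_norm (1 - a * z)
  nlinarith [norm_nonneg (z - a), norm_nonneg (1 - a * z)]

lemma P_ne_zero (a b c d : ℝ) (ha : a ∈ Set.Ioo (-1 : ℝ) 1) (hb : b ∈ Set.Ioo (-1 : ℝ) 1)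
    (hc : c ∈ Set.Ioo (-1 : ℝ) 1) (hd : d ∈ Set.Ioo (-1 : ℝ) 1) (z : ℂ)
    (hz : ‖z‖ < 1) :
    z * (z - a) * (z - b) * (z - c) * (z - d) +
      (1 - a * z) * (1 - b * z) * (1 - c * z) * (1 - d * z) ≠ 0 := by
  intro h
  have hA := blaschke_lt a ha z hz
  have hB := blaschke_lt b hb z hz
  have hC := blaschke_lt c hc z hz
  have hD := blaschke_lt d hd z hz
  have n0 := norm_nonneg z
  have n1 := norm_nonneg (z - (a:ℂ))
  have n2 := norm_nonneg (z - (b:ℂ))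
  have n3 := norm_nonneg (z - (c:ℂ))
  have n4 := norm_nonneg (z - (d:ℂ))
  have q3 : (‖z - a‖ * ‖z - b‖) *
      (‖z - c‖ * ‖z - d‖) <
      (‖1 - a * z‖ * ‖1 - b * z‖) *
      (‖1 - c * z‖ * ‖1 - d * z‖) :=
    mul_lt_mul'' (mul_lt_mul'' hA hB n1 n2) (mul_lt_mul'' hC hD n3 n4)
      (mul_nonneg n1 n2) (mul_nonneg n3 n4)
  have q4 : ‖z‖ * ((‖z - a‖ * ‖z - b‖) *
      (‖z - c‖ * ‖z - d‖)) <
      1 * ((‖1 - a * z‖ * ‖1 - b * z‖) *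
      (‖1 - c * z‖ * ‖1 - d * z‖)) :=
    mul_lt_mul'' hz q3 n0 (by positivity)
  have heq : z * (z - a) * (z - b) * (z - c) * (z - d) =
      -((1 - a * z) * (1 - b * z) * (1 - c * z) * (1 - d * z)) := by
    linear_combination h
  have habs : ‖z * (z - a) * (z - b) * (z - c) * (z - d)‖ =
      ‖(1 - a * z) * (1 - b * z) * (1 - c * z) * (1 - d * z)‖ := by
    rw [heq, norm_neg]
  simp only [norm_mul] at habs
  nlinarith [habs, q4]

lemma P_ne_zero' (a b c d : ℝ) (ha : a ∈ Set.Ioo (-1 : ℝ) 1) (hb : b ∈ Set.Ioo (-1 : ℝ) 1)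
    (hc : c ∈ Set.Ioo (-1 : ℝ) 1) (hd : d ∈ Set.Ioo (-1 : ℝ) 1) (z : ℂ)
    (hz : 1 < ‖z‖) :
    z * (z - a) * (z - b) * (z - c) * (z - d) +
      (1 - a * z) * (1 - b * z) * (1 - c * z) * (1 - d * z) ≠ 0 := by
  intro h
  have hA := blaschke_gt a ha z hz
  have hB := blaschke_gt b hb z hz
  have hC := blaschke_gt c hc z hz
  have hD := blaschke_gt d hd z hz
  have n0 := norm_nonneg z
  have m1 := norm_nonneg (1 - (a:ℂ) * z)
  have m2 := norm_nonneg (1 - (b:ℂ) * z)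
  have m3 := norm_nonneg (1 - (c:ℂ) * z)
  have m4 := norm_nonneg (1 - (d:ℂ) * z)
  have q3 : (‖1 - a * z‖ * ‖1 - b * z‖) *
      (‖1 - c * z‖ * ‖1 - d * z‖) <
      (‖z - a‖ * ‖z - b‖) *
      (‖z - c‖ * ‖z - d‖) :=
    mul_lt_mul'' (mul_lt_mul'' hA hB m1 m2) (mul_lt_mul'' hC hD m3 m4)
      (mul_nonneg m1 m2) (mul_nonneg m3 m4)
  have q4 : 1 * ((‖1 - a * z‖ * ‖1 - b * z‖) *
      (‖1 - c * z‖ * ‖1 - d * z‖)) <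
      ‖z‖ * ((‖z - a‖ * ‖z - b‖) *
      (‖z - c‖ * ‖z - d‖)) :=
    mul_lt_mul'' hz q3 (by norm_num) (by positivity)
  have heq : z * (z - a) * (z - b) * (z - c) * (z - d) =
      -((1 - a * z) * (1 - b * z) * (1 - c * z) * (1 - d * z)) := by
    linear_combination h
  have habs : ‖z * (z - a) * (z - b) * (z - c) * (z - d)‖ =
      ‖(1 - a * z) * (1 - b * z) * (1 - c * z) * (1 - d * z)‖ := by
    rw [heq, norm_neg]
  simp only [norm_mul] at habs
  nlinarith [habs, q4]

/-- For real `a, b, c, d ∈ (-1,1)`, with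
`α = 1 + a + b + c + d − abcd` and
`2β = (1+c)(1+d) + b(1+c+d−cd) + a(1+c+d−cd − b(−1+c+d+cd))`,
`z = −1` is a root of `z(z−a)(z−b)(z−c)(z−d) + (1−az)(1−bz)(1−cz)(1−dz) = 0`, and every
other root `z₀` satisfies `|z₀| = 1` and `2(Re z₀)² − α(Re z₀) + (β−1) = 0`. -/
theorem roots_deg_four_quintic_plus
    (a b c d : ℝ) (ha : a ∈ Set.Ioo (-1 : ℝ) 1) (hb : b ∈ Set.Ioo (-1 : ℝ) 1)
    (hc : c ∈ Set.Ioo (-1 : ℝ) 1) (hd : d ∈ Set.Ioo (-1 : ℝ) 1)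
    (α β : ℝ)
    (hα : α = 1 + a + b + c + d - a * b * c * d)
    (hβ : 2 * β = (1 + c) * (1 + d) + b * (1 + c + d - c * d) +
      a * (1 + c + d - c * d - b * (-1 + c + d + c * d))) :
    ((-1 : ℂ) * (-1 - a) * (-1 - b) * (-1 - c) * (-1 - d) +
        (1 - a * (-1)) * (1 - b * (-1)) * (1 - c * (-1)) * (1 - d * (-1)) = 0) ∧
    ∀ z₀ : ℂ,
      z₀ * (z₀ - a) * (z₀ - b) * (z₀ - c) * (z₀ - d) +
        (1 - a * z₀) * (1 - b * z₀) * (1 - c * z₀) * (1 - d * z₀) = 0 →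
      z₀ ≠ -1 →
      ‖z₀‖ = 1 ∧ 2 * z₀.re ^ 2 - α * z₀.re + (β - 1) = 0 := by
  constructor
  · ring
  intro z₀ hP hne
  have habs : ‖z₀‖ = 1 := by
    rcases lt_trichotomy (‖z₀‖) 1 with h | h | h
    · exact absurd hP (P_ne_zero a b c d ha hb hc hd z₀ h)
    · exact h
    · exact absurd hP (P_ne_zero' a b c d ha hb hc hd z₀ h)
  refine ⟨habs, ?_⟩
  have hαC : (α : ℂ) = 1 + a + b + c + d - a * b * c * d := by
    exact_mod_cast congrArg (Complex.ofReal) hα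
  have hβC : 2 * (β : ℂ) = (1 + c) * (1 + d) + b * (1 + c + d - c * d) +
      a * (1 + c + d - c * d - b * (-1 + c + d + c * d)) := by
    exact_mod_cast congrArg (Complex.ofReal) hβ
  have hfac : z₀ * (z₀ - a) * (z₀ - b) * (z₀ - c) * (z₀ - d) +
      (1 - a * z₀) * (1 - b * z₀) * (1 - c * z₀) * (1 - d * z₀) =
      (z₀ + 1) * (z₀ ^ 4 - α * z₀ ^ 3 + 2 * β * z₀ ^ 2 - α * z₀ + 1) := by
    linear_combination ((z₀ + 1) * (z₀ ^ 3 + z₀)) * hαC - ((z₀ + 1) * z₀ ^ 2) * hβC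
  have hne1 : z₀ + 1 ≠ 0 := by
    intro h
    exact hne (by linear_combination h)
  have hQ : z₀ ^ 4 - α * z₀ ^ 3 + 2 * β * z₀ ^ 2 - α * z₀ + 1 = 0 :=
    (mul_eq_zero.mp (hfac.symm.trans hP)).resolve_left hne1
  set x := z₀.re with hx
  set y := z₀.im with hy
  have hcirc : x * x + y * y = 1 := by
    rw [← Complex.normSq_apply, ← Complex.sq_norm, habs]; norm_num
  have hy2 : y ^ 2 = 1 - x ^ 2 := by nlinarith [hcirc]
  have hre := congrArg Complex.re hQ
  have him := congrArg Complex.im hQ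
  simp only [Complex.add_re, Complex.sub_re, Complex.mul_re, Complex.mul_im,
    Complex.add_im, Complex.sub_im, Complex.one_re, Complex.one_im,
    Complex.ofReal_re, Complex.ofReal_im, Complex.zero_re, Complex.zero_im,
    Complex.re_ofNat, Complex.im_ofNat,
    pow_succ, pow_zero, one_mul, ← hx, ← hy] at hre him
  have e1 : (4 * x ^ 2 - 2) * (2 * x ^ 2 - α * x + (β - 1)) = 0 := by
    linear_combination hre - (y ^ 2 + 1 - 7 * x ^ 2 + 3 * α * x - 2 * β) * hy2
  have e2 : 4 * x * y * (2 * x ^ 2 - α * x + (β - 1)) = 0 := by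
    linear_combination him - (y * (α - 4 * x)) * hy2
  have h4 : 4 * (2 * x ^ 2 - α * x + (β - 1)) ^ 2 =
      ((4 * x ^ 2 - 2) * (2 * x ^ 2 - α * x + (β - 1))) ^ 2 +
      (4 * x * y * (2 * x ^ 2 - α * x + (β - 1))) ^ 2 := by
    linear_combination (-(16 * x ^ 2 * (2 * x ^ 2 - α * x + (β - 1)) ^ 2)) * hy2
  rw [e1, e2] at h4
  nlinarith [h4]
end
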